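/- arXiv:1610.09967 — 10 statements merged into one kernel-verified Lean document; each statement's English description precedes it below -/
import Mathlib

section
/- Let 0 < λ < 1 and p > 1. Then for every sequence x : ℕ → ℂ with ‖x‖_p < ∞ one has ‖T_λ(x)‖_p ≤ λ^{(1−p)/p} ‖x‖_p, and the constant is sharp: ‖T_λ(ω(z))‖_p / ‖ω(z)‖_p → λ^{(1−p)/p} as z → 1⁻. In particular the ℓ^p → ℓ^p norm of T_λ equals λ^{(1−p)/p}. -/
/-- The ℓ^p norm of a sequence of complex numbers. -/
noncomputable def lpNorm (p : ℝ) (x : ℕ → ℂ) : ℝ :=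
  (∑' n : ℕ, ‖x n‖ ^ p) ^ (1 / p)

/-- The thinning with parameter `l` acting on sequences of complex numbers:
`[T_l(x)]_n = ∑_{k} C(k,n) l^n (1-l)^{k-n} x_k`. -/
noncomputable def thin (l : ℝ) (x : ℕ → ℂ) : ℕ → ℂ :=
  fun n => ∑' k : ℕ, (Nat.choose k n : ℂ) * (l : ℂ) ^ n * ((1 - l : ℝ) : ℂ) ^ (k - n) * x k

/-- The geometric probability distribution on ℕ with ratio `z`, as a complex sequence. -/
noncomputable def geom (z : ℝ) : ℕ → ℂ := fun n => (((1 - z) * z ^ n : ℝ) : ℂ)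


/-!
Write `T_l` as the kernel `K(n,k) = C(k,n) l^n (1-l)^(k-n)`. Its columns sum to `1` (binomial
theorem) and its rows to `1/l` (negative binomial series), so Schur's test, i.e. Hölder in each
row followed by Fubini, gives `‖T_l x‖_p^p ≤ (1/l)^(p-1) ‖x‖_p^p`.

For sharpness, `T_l` maps `ω(z)` to `ω(y)` with `y = l z / (1 - (1-l) z)`, and
`‖ω(z)‖_p^p = (1-z)^p / (1-z^p)`. As `z → 1⁻` also `y → 1⁻`, `(1-y)/(1-z) → 1/l`, and both
difference quotients `(1-z^p)/(1-z)` and `(1-y^p)/(1-y)` tend to `p`, the derivative of `t ↦ t^p`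
at `1`.
-/

open Filter Topology Real Set

theorem hasSum_choose_mul_pow_sub_mul_pow {𝕜 : Type*} [NormedField 𝕜] (n : ℕ) {r s : 𝕜}
    (h : ‖r * s‖ < 1) :
    HasSum (fun k => (k.choose n : 𝕜) * r ^ (k - n) * s ^ k) (s ^ n / (1 - r * s) ^ (n + 1)) := by
  have hvanish : ∀ k ∉ Set.range (· + n), (k.choose n : 𝕜) * r ^ (k - n) * s ^ k = 0 := by
    intro k hk
    have : k < n := by
      by_contra! h
      exact hk ⟨k - n, Nat.sub_add_cancel h⟩
    simp [Nat.choose_eq_zero_of_lt this]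
  rw [← (add_left_injective n).hasSum_iff hvanish, div_eq_mul_one_div]
  refine ((hasSum_choose_mul_geometric_of_norm_lt_one n h).mul_left (s ^ n)).congr_fun fun j => ?_
  simp only [Function.comp_apply, Nat.add_sub_cancel, mul_pow, pow_add]
  ring

noncomputable def thinKernel (l : ℝ) (n k : ℕ) : ℝ := k.choose n * l ^ n * (1 - l) ^ (k - n)

section thinKernel

variable {l : ℝ}

theorem thinKernel_nonneg (hl : 0 ≤ l) (hl1 : l ≤ 1) (n k : ℕ) : 0 ≤ thinKernel l n k := by
  have : 0 ≤ 1 - l := by linarith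
  unfold thinKernel
  positivity

theorem hasSum_thinKernel_col (l : ℝ) (k : ℕ) : HasSum (fun n => thinKernel l n k) 1 := by
  have hvanish : ∀ n ∉ Finset.range (k + 1), thinKernel l n k = 0 := fun n hn => by
    simp [thinKernel, Nat.choose_eq_zero_of_lt (by simpa using hn : k < n)]
  have hbinom : ∑ n ∈ Finset.range (k + 1), thinKernel l n k = 1 := by
    have := add_pow l (1 - l) k
    rw [add_sub_cancel, one_pow] at this
    rw [this]
    refine Finset.sum_congr rfl fun n _ => ?_
    simp only [thinKernel]
    ring
  exact hbinom ▸ hasSum_sum_of_ne_finset_zero hvanish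

theorem hasSum_thinKernel_row (hl : 0 < l) (hl2 : l < 2) (n : ℕ) :
    HasSum (thinKernel l n) (1 / l) := by
  have h : ‖(1 - l) * 1‖ < 1 := by
    rw [mul_one, Real.norm_eq_abs, abs_lt]; constructor <;> linarith
  have hsum : l ^ n * (1 ^ n / (1 - (1 - l) * 1) ^ (n + 1)) = 1 / l := by
    rw [mul_one, sub_sub_cancel, one_pow, pow_succ]
    field_simp
  refine hsum ▸ ((hasSum_choose_mul_pow_sub_mul_pow n h).mul_left (l ^ n)).congr_fun fun k => ?_
  simp only [thinKernel, one_pow, mul_one]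
  ring

theorem thinKernel_le_one (hl : 0 ≤ l) (hl1 : l ≤ 1) (n k : ℕ) : thinKernel l n k ≤ 1 :=
  le_hasSum (hasSum_thinKernel_col l k) n fun j _ => thinKernel_nonneg hl hl1 j k

end thinKernel

section SchurTest

variable {ι κ : Type*} {p : ℝ}

theorem summable_mul_of_summable_mul_rpow (hp : 1 ≤ p) {w a : ι → ℝ} (hw : ∀ i, 0 ≤ w i)
    (ha : ∀ i, 0 ≤ a i) (hws : Summable w) (hwa : Summable fun i => w i * a i ^ p) :
    Summable fun i => w i * a i := by
  refine (hws.add hwa).of_nonneg_of_le (fun i => mul_nonneg (hw i) (ha i)) fun i => ?_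
  have hle : a i ≤ 1 + a i ^ p := by
    rcases le_total (a i) 1 with h | h
    · linarith [rpow_nonneg (ha i) p]
    · linarith [self_le_rpow_of_one_le h hp]
  calc w i * a i ≤ w i * (1 + a i ^ p) := mul_le_mul_of_nonneg_left hle (hw i)
    _ = w i + w i * a i ^ p := by ring

theorem rpow_tsum_mul_le_of_hasSum (hp : 1 ≤ p) {w a : ι → ℝ} {s : ℝ} (hw : ∀ i, 0 ≤ w i)
    (ha : ∀ i, 0 ≤ a i) (hws : HasSum w s) (hwa : Summable fun i => w i * a i ^ p) :
    (∑' i, w i * a i) ^ p ≤ s ^ (p - 1) * ∑' i, w i * a i ^ p := by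
  have hwa0 : ∀ i, 0 ≤ w i * a i ^ p := fun i => mul_nonneg (hw i) (rpow_nonneg (ha i) p)
  have hs : 0 ≤ s := hws.nonneg hw
  have hT : 0 ≤ ∑' i, w i * a i ^ p := tsum_nonneg hwa0
  have hexp : 0 ≤ 1 - p⁻¹ := sub_nonneg.2 (inv_le_one_of_one_le₀ hp)
  have holder : ∑' i, w i * a i ≤ s ^ (1 - p⁻¹) * (∑' i, w i * a i ^ p) ^ p⁻¹ := by
    refine tsum_le_of_sum_le (fun i => mul_nonneg (hw i) (ha i)) fun t => ?_
    refine (inner_le_weight_mul_Lp_of_nonneg t hp w a hw ha).trans ?_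
    exact mul_le_mul
      (rpow_le_rpow (Finset.sum_nonneg fun i _ => hw i) (sum_le_hasSum t (fun i _ => hw i) hws)
        hexp)
      (rpow_le_rpow (Finset.sum_nonneg fun i _ => hwa0 i) (hwa.sum_le_tsum t fun i _ => hwa0 i)
        (by positivity))
      (rpow_nonneg (Finset.sum_nonneg fun i _ => hwa0 i) _) (rpow_nonneg hs _)
  calc (∑' i, w i * a i) ^ p ≤ (s ^ (1 - p⁻¹) * (∑' i, w i * a i ^ p) ^ p⁻¹) ^ p :=
        rpow_le_rpow (tsum_nonneg fun i => mul_nonneg (hw i) (ha i)) holder (by linarith)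
    _ = s ^ (p - 1) * ∑' i, w i * a i ^ p := by
        have hp0 : p ≠ 0 := by positivity
        rw [mul_rpow (by positivity) (by positivity), ← rpow_mul hs, ← rpow_mul hT,
          inv_mul_cancel₀ hp0, rpow_one, sub_mul, inv_mul_cancel₀ hp0, one_mul]

theorem summable_and_tsum_comm_of_nonneg {F : ι → κ → ℝ} (hF : ∀ i j, 0 ≤ F i j)
    (hcol : ∀ j, Summable fun i => F i j) (h : Summable fun j => ∑' i, F i j) :
    (Summable fun i => ∑' j, F i j) ∧ ∑' i, ∑' j, F i j = ∑' j, ∑' i, F i j := by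
  have hswap : Summable fun q : κ × ι => F q.2 q.1 :=
    (summable_prod_of_nonneg fun q => hF _ _).2 ⟨hcol, h⟩
  have hF' : Summable (Function.uncurry F) := hswap.prod_symm
  obtain ⟨hrow, hsum⟩ := (summable_prod_of_nonneg fun q => hF q.1 q.2).1 hF'
  exact ⟨hsum, (hF'.tsum_comm' hrow hcol).symm⟩

theorem summable_and_tsum_rpow_tsum_mul_le (hp : 1 ≤ p) {K : ι → κ → ℝ} {a : κ → ℝ} {A B : ℝ}
    (hK : ∀ i j, 0 ≤ K i j) (ha : ∀ j, 0 ≤ a j) (hrow : ∀ i, HasSum (K i) B)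
    (hcol : ∀ j, HasSum (fun i => K i j) A) (hap : Summable fun j => a j ^ p) :
    (Summable fun i => (∑' j, K i j * a j) ^ p) ∧
      ∑' i, (∑' j, K i j * a j) ^ p ≤ B ^ (p - 1) * (A * ∑' j, a j ^ p) := by
  have hap0 : ∀ j, 0 ≤ a j ^ p := fun j => Real.rpow_nonneg (ha j) p
  have hKap : ∀ i, Summable fun j => K i j * a j ^ p := fun i =>
    (hap.mul_left A).of_nonneg_of_le (fun j => mul_nonneg (hK i j) (hap0 j)) fun j =>
      mul_le_mul_of_nonneg_right (le_hasSum (hcol j) i fun i' _ => hK i' j) (hap0 j)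
  have hcolp : ∀ j, HasSum (fun i => K i j * a j ^ p) (A * a j ^ p) := fun j =>
    (hcol j).mul_right _
  obtain ⟨hS, hcomm⟩ := summable_and_tsum_comm_of_nonneg
    (fun i j => mul_nonneg (hK i j) (hap0 j)) (fun j => (hcolp j).summable)
    ((hap.mul_left A).congr fun j => (hcolp j).tsum_eq.symm)
  have hjensen : ∀ i, (∑' j, K i j * a j) ^ p ≤ B ^ (p - 1) * ∑' j, K i j * a j ^ p := fun i =>
    rpow_tsum_mul_le_of_hasSum hp (hK i) ha (hrow i) (hKap i)
  have hsummable : Summable fun i => (∑' j, K i j * a j) ^ p :=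
    (hS.mul_left _).of_nonneg_of_le
      (fun i => Real.rpow_nonneg (tsum_nonneg fun j => mul_nonneg (hK i j) (ha j)) p) hjensen
  refine ⟨hsummable, (hsummable.tsum_le_tsum hjensen (hS.mul_left _)).trans_eq ?_⟩
  rw [tsum_mul_left, hcomm, tsum_congr fun j => (hcolp j).tsum_eq, tsum_mul_left]

end SchurTest

noncomputable def thinRatio (l z : ℝ) : ℝ := l * z / (1 - (1 - l) * z)

section thinning

variable {l p : ℝ}

theorem thin_apply (x : ℕ → ℂ) (n : ℕ) : thin l x n = ∑' k, (thinKernel l n k : ℂ) * x k := by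
  simp [thin, thinKernel]

theorem norm_thin_le (hl : 0 ≤ l) (hl1 : l ≤ 1) {x : ℕ → ℂ} {n : ℕ}
    (hx : Summable fun k => thinKernel l n k * ‖x k‖) :
    ‖thin l x n‖ ≤ ∑' k, thinKernel l n k * ‖x k‖ := by
  have hnorm : ∀ k, ‖(thinKernel l n k : ℂ) * x k‖ = thinKernel l n k * ‖x k‖ := fun k => by
    rw [norm_mul, Complex.norm_real, norm_of_nonneg (thinKernel_nonneg hl hl1 n k)]
  rw [thin_apply]
  exact (norm_tsum_le_tsum_norm (hx.congr fun k => (hnorm k).symm)).trans_eq (tsum_congr hnorm)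

theorem summable_thinKernel_mul_norm (hl : 0 < l) (hl1 : l ≤ 1) (hp : 1 ≤ p) {x : ℕ → ℂ}
    (hx : Summable fun k => ‖x k‖ ^ p) (n : ℕ) : Summable fun k => thinKernel l n k * ‖x k‖ := by
  have hK0 := thinKernel_nonneg hl.le hl1 n
  refine summable_mul_of_summable_mul_rpow hp hK0 (fun k => norm_nonneg _)
    (hasSum_thinKernel_row hl (by linarith) n).summable ?_
  exact hx.of_nonneg_of_le (fun k => mul_nonneg (hK0 k) (rpow_nonneg (norm_nonneg _) p))
    fun k => mul_le_of_le_one_left (rpow_nonneg (norm_nonneg _) p) (thinKernel_le_one hl.le hl1 n k)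

theorem summable_and_tsum_norm_thin_rpow_le (hl : 0 < l) (hl1 : l ≤ 1) (hp : 1 ≤ p)
    {x : ℕ → ℂ} (hx : Summable fun k => ‖x k‖ ^ p) :
    (Summable fun n => ‖thin l x n‖ ^ p) ∧
      ∑' n, ‖thin l x n‖ ^ p ≤ (1 / l) ^ (p - 1) * ∑' k, ‖x k‖ ^ p := by
  obtain ⟨hsum, hle⟩ := summable_and_tsum_rpow_tsum_mul_le hp (thinKernel_nonneg hl.le hl1)
    (fun k => norm_nonneg (x k)) (hasSum_thinKernel_row hl (by linarith))
    (hasSum_thinKernel_col l) hx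
  have hpointwise : ∀ n, ‖thin l x n‖ ^ p ≤ (∑' k, thinKernel l n k * ‖x k‖) ^ p := fun n =>
    rpow_le_rpow (norm_nonneg _)
      (norm_thin_le hl.le hl1 (summable_thinKernel_mul_norm hl hl1 hp hx n)) (by linarith)
  have hthin : Summable fun n => ‖thin l x n‖ ^ p :=
    hsum.of_nonneg_of_le (fun n => rpow_nonneg (norm_nonneg _) p) hpointwise
  refine ⟨hthin, (hthin.tsum_le_tsum hpointwise hsum).trans ?_⟩
  simpa only [one_mul] using hle

theorem lpNorm_thin_le (hl : 0 < l) (hl1 : l ≤ 1) (hp : 1 ≤ p) {x : ℕ → ℂ}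
    (hx : Summable fun k => ‖x k‖ ^ p) : lpNorm p (thin l x) ≤ l ^ ((1 - p) / p) * lpNorm p x := by
  have hp0 : 0 < p := by linarith
  have hx0 : 0 ≤ ∑' k, ‖x k‖ ^ p := tsum_nonneg fun k => rpow_nonneg (norm_nonneg _) p
  calc lpNorm p (thin l x) ≤ ((1 / l) ^ (p - 1) * ∑' k, ‖x k‖ ^ p) ^ (1 / p) :=
        rpow_le_rpow (tsum_nonneg fun n => rpow_nonneg (norm_nonneg _) p)
          (summable_and_tsum_norm_thin_rpow_le hl hl1 hp hx).2 (by positivity)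
    _ = l ^ ((1 - p) / p) * lpNorm p x := by
        rw [mul_rpow (by positivity) hx0, ← rpow_mul (by positivity), one_div l, inv_rpow hl.le,
          ← rpow_neg hl.le, lpNorm]
        congr 2
        field_simp
        ring

theorem thin_geom {z : ℝ} (h : |(1 - l) * z| < 1) : thin l (geom z) = geom (thinRatio l z) := by
  funext n
  have hw : (1 - (1 - l) * z : ℂ) ≠ 0 := by
    exact_mod_cast (by linarith [(abs_lt.1 h).2] : (1 - (1 - l) * z : ℝ) ≠ 0)
  have hnorm : ‖((1 - l : ℝ) : ℂ) * z‖ < 1 := by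
    rwa [← Complex.ofReal_mul, Complex.norm_real, Real.norm_eq_abs]
  have hsum := (hasSum_choose_mul_pow_sub_mul_pow n hnorm).mul_left ((1 - z) * l ^ n : ℂ)
  rw [thin, (hsum.congr_fun fun k => by simp only [geom]; push_cast; ring).tsum_eq, geom, thinRatio]
  push_cast
  rw [div_pow, one_sub_div hw, pow_succ]
  field_simp
  ring

end thinning

section geom

variable {l p : ℝ}

theorem lpNorm_geom (hp : 0 < p) {z : ℝ} (hz0 : 0 ≤ z) (hz1 : z < 1) :
    lpNorm p (geom z) = ((1 - z) ^ p / (1 - z ^ p)) ^ (1 / p) := by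
  have hterm : ∀ n : ℕ, ‖geom z n‖ ^ p = (1 - z) ^ p * (z ^ p) ^ n := fun n => by
    have hpow : (z ^ n) ^ p = (z ^ p) ^ n := by
      rw [← rpow_natCast, ← rpow_mul hz0, mul_comm, rpow_mul hz0, rpow_natCast]
    rw [geom, Complex.norm_real, norm_of_nonneg (by have := pow_nonneg hz0 n; nlinarith),
      mul_rpow (by linarith) (pow_nonneg hz0 n), hpow]
  have hgeom := (hasSum_geometric_of_lt_one (rpow_nonneg hz0 p) (rpow_lt_one hz0 hz1 hp)).mul_left
    ((1 - z) ^ p)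
  rw [lpNorm, tsum_congr hterm, hgeom.tsum_eq, ← div_eq_mul_inv]

theorem lpNorm_geom_div_lpNorm_geom (hp : 0 < p) {y z : ℝ} (hy0 : 0 ≤ y) (hy1 : y < 1)
    (hz0 : 0 ≤ z) (hz1 : z < 1) :
    lpNorm p (geom y) / lpNorm p (geom z) =
      (((1 - y) / (1 - z)) ^ (p - 1) * ((1 - z ^ p) / (1 - z) / ((1 - y ^ p) / (1 - y)))) ^
        (1 / p) := by
  have hy : 0 < 1 - y := by linarith
  have hz : 0 < 1 - z := by linarith
  have hyp : 0 < 1 - y ^ p := by linarith [rpow_lt_one hy0 hy1 hp]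
  have hzp : 0 < 1 - z ^ p := by linarith [rpow_lt_one hz0 hz1 hp]
  rw [lpNorm_geom hp hy0 hy1, lpNorm_geom hp hz0 hz1, ← div_rpow (by positivity) (by positivity)]
  congr 1
  rw [div_rpow hy.le hz.le, rpow_sub_one hy.ne', rpow_sub_one hz.ne']
  have := rpow_pos_of_pos hy p
  have := rpow_pos_of_pos hz p
  field_simp

theorem tendsto_one_sub_rpow_div_one_sub (p : ℝ) :
    Tendsto (fun y : ℝ => (1 - y ^ p) / (1 - y)) (𝓝[<] 1) (𝓝 p) := by
  have hderiv : HasDerivAt (fun y : ℝ => y ^ p) p 1 := by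
    simpa using hasDerivAt_rpow_const (x := 1) (p := p) (Or.inl one_ne_zero)
  refine ((hasDerivAt_iff_tendsto_slope.1 hderiv).mono_left
    (nhdsWithin_mono 1 fun y hy => ne_of_lt hy)).congr fun y => ?_
  rw [slope_def_field, one_rpow, ← neg_div_neg_eq, neg_sub, neg_sub]

theorem thinRatio_mem_Ioo (hl : 0 < l) {z : ℝ} (hz : z ∈ Ioo 0 1) : thinRatio l z ∈ Ioo 0 1 := by
  have hw : 0 < 1 - (1 - l) * z := by nlinarith [hz.1, hz.2]
  exact ⟨div_pos (mul_pos hl hz.1) hw, (div_lt_one hw).2 (by nlinarith [hz.2])⟩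

theorem tendsto_thinRatio (hl : 0 < l) : Tendsto (thinRatio l) (𝓝[<] 1) (𝓝[<] 1) := by
  have hcont : ContinuousAt (thinRatio l) 1 :=
    (continuousAt_const.mul continuousAt_id).div
      (continuousAt_const.sub (continuousAt_const.mul continuousAt_id)) (by simp [hl.ne'])
  have hone : thinRatio l 1 = 1 := by simp [thinRatio, hl.ne']
  refine tendsto_nhdsWithin_iff.2 ⟨?_, ?_⟩
  · simpa only [hone] using hcont.tendsto.mono_left nhdsWithin_le_nhds
  · filter_upwards [Ioo_mem_nhdsLT one_pos] with z hz
    exact (thinRatio_mem_Ioo hl hz).2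

theorem tendsto_lpNorm_thin_geom_div_lpNorm_geom (hl : 0 < l) (hl2 : l < 2) (hp : 0 < p) :
    Tendsto (fun z => lpNorm p (thin l (geom z)) / lpNorm p (geom z)) (𝓝[<] 1)
      (𝓝 (l ^ ((1 - p) / p))) := by
  have hw : Tendsto (fun z : ℝ => (1 - (1 - l) * z)⁻¹) (𝓝[<] 1) (𝓝 l⁻¹) := by
    have : ContinuousAt (fun z : ℝ => (1 - (1 - l) * z)⁻¹) 1 :=
      (continuousAt_const.sub (continuousAt_const.mul continuousAt_id)).inv₀ (by simp [hl.ne'])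
    simpa using this.tendsto.mono_left nhdsWithin_le_nhds
  have hratio : ∀ᶠ z in 𝓝[<] (1 : ℝ), (1 - (1 - l) * z)⁻¹ = (1 - thinRatio l z) / (1 - z) := by
    filter_upwards [Ioo_mem_nhdsLT one_pos] with z hz
    have : 0 < 1 - (1 - l) * z := by nlinarith [hz.1, hz.2]
    have : 0 < 1 - z := by linarith [hz.2]
    rw [thinRatio]
    field_simp
    ring
  have hD := tendsto_one_sub_rpow_div_one_sub p
  have hlim : Tendsto (fun z => (((1 - thinRatio l z) / (1 - z)) ^ (p - 1) *
      ((1 - z ^ p) / (1 - z) / ((1 - thinRatio l z ^ p) / (1 - thinRatio l z)))) ^ (1 / p))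
      (𝓝[<] 1) (𝓝 ((l⁻¹ ^ (p - 1) * (p / p)) ^ (1 / p))) :=
    (((hw.congr' hratio).rpow_const (Or.inl (inv_ne_zero hl.ne'))).mul
      (hD.div (hD.comp (tendsto_thinRatio hl)) hp.ne')).rpow_const (Or.inr (one_div_pos.2 hp).le)
  rw [div_self hp.ne', mul_one, inv_rpow hl.le, ← rpow_neg hl.le, ← rpow_mul hl.le, neg_sub,
    ← div_eq_mul_one_div] at hlim
  refine hlim.congr' ?_
  filter_upwards [Ioo_mem_nhdsLT one_pos] with z hz
  obtain ⟨hy0, hy1⟩ := thinRatio_mem_Ioo hl hz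
  have habs : |(1 - l) * z| < 1 := by
    rw [abs_mul, abs_of_pos hz.1]
    exact mul_lt_one_of_nonneg_of_lt_one_left (abs_nonneg _)
      (abs_sub_lt_iff.2 ⟨by linarith, by linarith⟩) hz.2.le
  rw [thin_geom habs, lpNorm_geom_div_lpNorm_geom hp hy0.le hy1 hz.1.le hz.2]

end geom

theorem thinning_pp_norm (l p : ℝ) (hl : 0 < l) (hl1 : l < 1) (hp : 1 < p) :
    (∀ x : ℕ → ℂ, Summable (fun n => ‖x n‖ ^ p) →
        lpNorm p (thin l x) ≤ l ^ ((1 - p) / p) * lpNorm p x) ∧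
    Filter.Tendsto (fun z => lpNorm p (thin l (geom z)) / lpNorm p (geom z))
      (nhdsWithin 1 (Set.Iio 1)) (nhds (l ^ ((1 - p) / p))) :=
  ⟨fun _ hx => lpNorm_thin_le hl hl1.le hp.le hx,
    tendsto_lpNorm_thin_geom_div_lpNorm_geom hl (by linarith) (by linarith)⟩
end

section
/- (Logarithmic Sobolev inequality for the quantum-limited attenuator, finite-dimensional form.) Let 0 < a < 1, 0 < z < 1, N ∈ ℕ, and let x = (x_0,…,x_N) ∈ ℝ^{N+1} have nonnegative components with ∑_{n=0}^N x_n^{1/a} = 1. Set ξ = z^{1/a}. Then F_a(x) + μ(z,a) S_a(x) ≤ (ξ^a − ξ)/(1−ξ) + μ(z,a) · (−ln(1−ξ) − ξ ln ξ/(1−ξ)). -/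
/-- `F_a(x) = ∑_{n=1}^N n (x_n |x_{n-1}|^{(1-a)/a} - |x_n|^{1/a})`
(real powers, with `0 ^ c = 0` for `c > 0`). -/
noncomputable def Fa (a : ℝ) (N : ℕ) (x : ℕ → ℝ) : ℝ :=
  ∑ n ∈ Finset.Icc 1 N, (n : ℝ) * (x n * |x (n - 1)| ^ ((1 - a) / a) - |x n| ^ (1 / a))

/-- `S_a(x) = -∑_{n=0}^N |x_n|^{1/a} ln(|x_n|^{1/a})` (with `0 · ln 0 = 0`). -/
noncomputable def Sa (a : ℝ) (N : ℕ) (x : ℕ → ℝ) : ℝ :=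
  -∑ n ∈ Finset.range (N + 1), |x n| ^ (1 / a) * Real.log (|x n| ^ (1 / a))

/-- `μ(z,a) = a (a z^{(a-1)/a} - 1 + (1-a) z) / ln z`. -/
noncomputable def mu (z a : ℝ) : ℝ :=
  a * (a * z ^ ((a - 1) / a) - 1 + (1 - a) * z) / Real.log z

/-!
Put `p n = x n ^ (1 / a)`, a probability vector, with tails `m k = ∑_{j ≥ k} p j`. Hölder's
inequality bounds `F_a` by `∑_{k ≥ 1} (m (k-1) ^ (1 - a) * m k ^ a - m k)`, and the chain rule for
entropy splits `S` along the two-point laws `(p k / m k, m (k+1) / m k)`. The left-hand side is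
then at most `∑_k m k * levelGain a μ (p k / m k)`, so it suffices that `levelGain a μ t ≤ t V` on
`[0, 1]`, `V` being the right-hand side. Equality holds at `t = 1 - ξ` (the geometric law), and
`levelGain a μ t / t` increases before that point and decreases after: its derivative has the sign
of `muRatio a (1 - t) - muRatio a ξ`, where `μ(z, a) = muRatio a ξ` and `muRatio a` is increasing
on `(0, 1)`.
-/

open Real Set

theorem rpow_mul_rpow_add_le {a : ℝ} (ha : 0 < a) (ha1 : a < 1) {u v U V : ℝ}
    (hu : 0 ≤ u) (hv : 0 ≤ v) (hU : 0 ≤ U) (hV : 0 ≤ V) :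
    u ^ (1 - a) * v ^ a + U ^ (1 - a) * V ^ a ≤ (u + U) ^ (1 - a) * (v + V) ^ a := by
  have h := inner_le_Lp_mul_Lq_of_nonneg Finset.univ (HolderConjugate.one_sub_inv_inv ha ha1)
    (f := ![u ^ (1 - a), U ^ (1 - a)]) (g := ![v ^ a, V ^ a])
    (by simpa [Fin.forall_fin_two] using ⟨by positivity, by positivity⟩)
    (by simpa [Fin.forall_fin_two] using ⟨by positivity, by positivity⟩)
  have hpow : ∀ {b w : ℝ}, 0 < b → 0 ≤ w → (w ^ b) ^ b⁻¹ = w := fun hb hw =>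
    rpow_rpow_inv hw hb.ne'
  simpa [Fin.sum_univ_two, hpow ha hv, hpow ha hV, hpow (sub_pos.2 ha1) hu,
    hpow (sub_pos.2 ha1) hU] using h

theorem add_sub_rpow_le_mul_log {a s : ℝ} (ha : 0 < a) (ha1 : a < 1) (hs0 : 0 < s)
    (hs1 : s ≤ 1) : a + (1 - a) * s - s ^ (1 - a) ≤ a * (1 - a) * (s - 1) * log s := by
  -- `h` is convex on `(0, 1]` with `h 1 = h' 1 = 0`.
  set h : ℝ → ℝ := fun s => a * (1 - a) * (s - 1) * log s - (a + (1 - a) * s - s ^ (1 - a))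
  set h' : ℝ → ℝ := fun s => a * (1 - a) * (log s + 1 - s⁻¹) - (1 - a) + (1 - a) * s ^ (-a)
  have hh : ∀ s > 0, HasDerivAt h (h' s) s := by
    intro s hs
    have := ((((hasDerivAt_id s).sub_const 1).const_mul (a * (1 - a))).mul
      (hasDerivAt_log hs.ne')).sub ((((hasDerivAt_id s).const_mul (1 - a)).const_add a).sub
        (hasDerivAt_rpow_const (p := 1 - a) (Or.inl hs.ne')))
    refine this.congr_deriv ?_
    rw [show 1 - a - 1 = -a by ring]
    simp only [h', id]
    field_simp
    ring
  have hh' : ∀ s > 0, HasDerivAt h' (a * (1 - a) * (s⁻¹ + (s ^ 2)⁻¹ - s ^ (-a - 1))) s := by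
    intro s hs
    have := (((((hasDerivAt_log hs.ne').add_const 1).sub (hasDerivAt_inv hs.ne')).const_mul
      (a * (1 - a))).sub_const (1 - a)).add
        ((hasDerivAt_rpow_const (p := -a) (Or.inl hs.ne')).const_mul (1 - a))
    refine this.congr_deriv ?_
    ring
  have hD : interior (Ioc (0 : ℝ) 1) = Ioo 0 1 := interior_Ioc
  have h'_mono : MonotoneOn h' (Ioc 0 1) := by
    refine monotoneOn_of_hasDerivWithinAt_nonneg (convex_Ioc 0 1)
      (fun s hs => (hh' s hs.1).continuousAt.continuousWithinAt)
      (fun s hs => (hh' s (hD ▸ hs).1).hasDerivWithinAt) fun s hs => ?_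
    rw [hD] at hs
    have : s ^ (-a - 1) ≤ (s ^ 2)⁻¹ := by
      rw [← rpow_natCast, ← rpow_neg hs.1.le]
      exact rpow_le_rpow_of_exponent_ge hs.1 hs.2.le (by push_cast; linarith)
    have : 0 ≤ s⁻¹ := inv_nonneg.2 hs.1.le
    have : 0 < a * (1 - a) := mul_pos ha (by linarith)
    nlinarith
  have h_anti : AntitoneOn h (Ioc 0 1) := by
    refine antitoneOn_of_hasDerivWithinAt_nonpos (convex_Ioc 0 1)
      (fun s hs => (hh s hs.1).continuousAt.continuousWithinAt)
      (fun s hs => (hh s (hD ▸ hs).1).hasDerivWithinAt) fun s hs => ?_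
    rw [hD] at hs
    have := h'_mono ⟨hs.1, hs.2.le⟩ ⟨one_pos, le_rfl⟩ hs.2.le
    simpa [h'] using this
  simpa [h] using h_anti ⟨hs0, hs1⟩ ⟨one_pos, le_rfl⟩ hs1

noncomputable def muRatio (a s : ℝ) : ℝ := (a * s ^ (a - 1) - 1 + (1 - a) * s ^ a) / log s

theorem muRatio_monotoneOn {a : ℝ} (ha : 0 < a) (ha1 : a < 1) :
    MonotoneOn (muRatio a) (Ioo 0 1) := by
  have hderiv : ∀ s ∈ Ioo (0 : ℝ) 1, HasDerivAt (muRatio a)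
      (((a * ((a - 1) * s ^ (a - 1 - 1)) + (1 - a) * (a * s ^ (a - 1))) * log s
        - (a * s ^ (a - 1) - 1 + (1 - a) * s ^ a) * s⁻¹) / log s ^ 2) s := fun s hs =>
    ((((hasDerivAt_rpow_const (Or.inl hs.1.ne')).const_mul a).sub_const 1).add
      ((hasDerivAt_rpow_const (Or.inl hs.1.ne')).const_mul (1 - a))).div
      (hasDerivAt_log hs.1.ne') (log_neg hs.1 hs.2).ne
  refine monotoneOn_of_hasDerivWithinAt_nonneg (convex_Ioo 0 1)
    (fun s hs => (hderiv s hs).continuousAt.continuousWithinAt)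
    (fun s hs => (hderiv s (by simpa using hs)).hasDerivWithinAt) fun s hs => ?_
  rw [interior_Ioo] at hs
  obtain ⟨hs0, hs1⟩ := hs
  have e1 : s ^ (a - 1 - 1) * s = s ^ (a - 1) := by rw [← rpow_add_one hs0.ne']; ring_nf
  have e2 : s ^ (a - 1) * s = s ^ a := by rw [← rpow_add_one hs0.ne']; ring_nf
  have e3 : s ^ (a - 1) * s ^ (1 - a) = 1 := by rw [← rpow_add hs0]; simp
  have key : a * s ^ (a - 1) - 1 + (1 - a) * s ^ a ≤
      a * (1 - a) * (s ^ a - s ^ (a - 1)) * log s := by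
    have := mul_le_mul_of_nonneg_left (add_sub_rpow_le_mul_log ha ha1 hs0 hs1.le)
      (rpow_nonneg hs0.le (a - 1))
    have lhs : s ^ (a - 1) * (a + (1 - a) * s - s ^ (1 - a)) =
        a * s ^ (a - 1) - 1 + (1 - a) * s ^ a := by
      linear_combination (1 - a) * e2 - e3
    have rhs : s ^ (a - 1) * (a * (1 - a) * (s - 1) * log s) =
        a * (1 - a) * (s ^ a - s ^ (a - 1)) * log s := by
      linear_combination a * (1 - a) * log s * e2
    rwa [lhs, rhs] at this
  have hinv : s * s⁻¹ = 1 := mul_inv_cancel₀ hs0.ne'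
  refine div_nonneg ?_ (sq_nonneg _)
  rw [← mul_nonneg_iff_of_pos_left hs0]
  linear_combination key - (a * (a - 1) * log s) * e1 - ((1 - a) * a * log s) * e2
    + (a * s ^ (a - 1) - 1 + (1 - a) * s ^ a) * hinv

theorem mu_eq_muRatio {a z : ℝ} (ha : a ≠ 0) (hz : 0 < z) : mu z a = muRatio a (z ^ (1 / a)) := by
  have hpow : ∀ b, (z ^ (1 / a)) ^ b = z ^ (b / a) := fun b => by
    rw [← rpow_mul hz.le]; ring_nf
  rw [mu, muRatio, hpow, hpow, div_self ha, rpow_one, log_rpow hz]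
  field_simp

noncomputable def levelGain (a μ t : ℝ) : ℝ :=
  μ * (negMulLog t + negMulLog (1 - t)) + ((1 - t) ^ a - (1 - t))

section LevelGain

variable {a μ : ℝ}

theorem continuous_levelGain (ha : 0 ≤ a) : Continuous (levelGain a μ) :=
  (continuous_const.mul (continuous_negMulLog.add
    (continuous_negMulLog.comp (continuous_const.sub continuous_id)))).add
    (((continuous_rpow_const ha).comp (continuous_const.sub continuous_id)).sub
      (continuous_const.sub continuous_id))

theorem hasDerivAt_levelGain_div {t : ℝ} (ht0 : 0 < t) (ht1 : t < 1) :
    HasDerivAt (fun t => levelGain a μ t / t)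
      ((μ - muRatio a (1 - t)) * log (1 - t) / t ^ 2) t := by
  have hs : 0 < 1 - t := sub_pos.2 ht1
  have hsub := (hasDerivAt_id t).const_sub 1
  have hnum := (((hasDerivAt_negMulLog ht0.ne').add
      ((hasDerivAt_negMulLog hs.ne').comp t hsub)).const_mul μ).add
    (((hasDerivAt_rpow_const (p := a) (Or.inl hs.ne')).comp t hsub).sub hsub)
  refine (hnum.div (hasDerivAt_id t) ht0.ne').congr_deriv ?_
  have hlog : log (1 - t) ≠ 0 := (log_neg hs (by linarith)).ne
  have e : (1 - t) ^ (a - 1) * (1 - t) = (1 - t) ^ a := by rw [← rpow_add_one hs.ne']; ring_nf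
  simp only [muRatio, negMulLog, id, Pi.add_apply, Pi.sub_apply, Function.comp_apply]
  field_simp
  linear_combination a * e

theorem levelGain_div_le {ξ t : ℝ} (ha : 0 < a) (ha1 : a < 1) (hξ0 : 0 < ξ) (hξ1 : ξ < 1)
    (ht0 : 0 < t) (ht1 : t ≤ 1) :
    levelGain a (muRatio a ξ) t / t ≤ levelGain a (muRatio a ξ) (1 - ξ) / (1 - ξ) := by
  set σ : ℝ → ℝ := fun t => levelGain a (muRatio a ξ) t / t
  have hcont : ContinuousOn σ (Ioi 0) :=
    (continuous_levelGain ha.le).continuousOn.div continuousOn_id fun t ht => ht.ne'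
  have hlog : ∀ t ∈ Ioo (0 : ℝ) 1, log (1 - t) < 0 := fun t ht =>
    log_neg (by linarith [ht.2]) (by linarith [ht.1])
  have hmono : MonotoneOn σ (Ioc 0 (1 - ξ)) := by
    refine monotoneOn_of_hasDerivWithinAt_nonneg (convex_Ioc _ _)
      (hcont.mono fun t ht => ht.1)
      (fun t ht =>
        (hasDerivAt_levelGain_div (by simp_all) (by simp at ht; linarith)).hasDerivWithinAt)
      fun t ht => ?_
    rw [interior_Ioc] at ht
    have hν := muRatio_monotoneOn ha ha1 ⟨hξ0, hξ1⟩
      (show 1 - t ∈ Ioo 0 1 from ⟨by linarith [ht.2], by linarith [ht.1]⟩) (by linarith [ht.2])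
    exact div_nonneg (mul_nonneg_of_nonpos_of_nonpos (by linarith)
      (hlog t ⟨ht.1, by linarith [ht.2]⟩).le) (sq_nonneg _)
  have hanti : AntitoneOn σ (Icc (1 - ξ) 1) := by
    refine antitoneOn_of_hasDerivWithinAt_nonpos (convex_Icc _ _)
      (hcont.mono fun t ht => by simp at ht ⊢; linarith [ht.1])
      (fun t ht =>
        (hasDerivAt_levelGain_div (by simp at ht; linarith) (by simp_all)).hasDerivWithinAt)
      fun t ht => ?_
    rw [interior_Icc] at ht
    have hν := muRatio_monotoneOn ha ha1
      (show 1 - t ∈ Ioo 0 1 from ⟨by linarith [ht.2], by linarith [ht.1]⟩) ⟨hξ0, hξ1⟩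
      (by linarith [ht.1])
    exact div_nonpos_of_nonpos_of_nonneg (mul_nonpos_of_nonneg_of_nonpos (by linarith)
      (hlog t ⟨by linarith [ht.1], ht.2⟩).le) (sq_nonneg _)
  rcases le_total t (1 - ξ) with h | h
  · exact hmono ⟨ht0, h⟩ ⟨by linarith, le_rfl⟩ h
  · exact hanti ⟨le_rfl, by linarith⟩ ⟨h, ht1⟩ h

theorem levelGain_le_mul_div {ξ t : ℝ} (ha : 0 < a) (ha1 : a < 1) (hξ0 : 0 < ξ) (hξ1 : ξ < 1)
    (ht0 : 0 ≤ t) (ht1 : t ≤ 1) :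
    levelGain a (muRatio a ξ) t ≤ t * (levelGain a (muRatio a ξ) (1 - ξ) / (1 - ξ)) := by
  rcases ht0.eq_or_lt with rfl | ht0
  · simp [levelGain]
  · rw [← div_le_iff₀' ht0]
    exact levelGain_div_le ha ha1 hξ0 hξ1 ht0 ht1

theorem levelGain_one_sub_div {ξ : ℝ} (hξ1 : ξ ≠ 1) :
    levelGain a μ (1 - ξ) / (1 - ξ) =
      (ξ ^ a - ξ) / (1 - ξ) + μ * (-log (1 - ξ) - ξ * log ξ / (1 - ξ)) := by
  have : 1 - ξ ≠ 0 := sub_ne_zero.2 hξ1.symm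
  simp only [levelGain, negMulLog, sub_sub_cancel]
  field_simp
  ring

theorem add_mul_levelGain_div {u v : ℝ} (hv : 0 ≤ v) (huv : 0 < u + v) :
    (u + v) * levelGain a μ (u / (u + v)) =
      μ * (negMulLog u + negMulLog v - negMulLog (u + v)) + ((u + v) ^ (1 - a) * v ^ a - v) := by
  have hv' : 1 - u / (u + v) = v / (u + v) := by field_simp; ring
  have hlog : ∀ w, (u + v) * negMulLog (w / (u + v)) =
      negMulLog w - w / (u + v) * negMulLog (u + v) := by
    intro w
    have := negMulLog_mul (u + v) (w / (u + v))
    rw [mul_div_cancel₀ _ huv.ne'] at this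
    linarith
  have hpow : (u + v) * (v / (u + v)) ^ a = (u + v) ^ (1 - a) * v ^ a := by
    rw [div_rpow hv huv.le, rpow_sub huv, rpow_one]
    field_simp
  rw [levelGain, hv', mul_add, mul_sub, hpow, mul_div_cancel₀ _ huv.ne', mul_left_comm, mul_add,
    hlog, hlog]
  field_simp
  ring

theorem levelGain_homogenized_le {W u v : ℝ} (ha : a ≠ 0)
    (hW : ∀ t, 0 ≤ t → t ≤ 1 → levelGain a μ t ≤ t * W) (hu : 0 ≤ u) (hv : 0 ≤ v) :
    μ * (negMulLog u + negMulLog v - negMulLog (u + v)) + ((u + v) ^ (1 - a) * v ^ a - v) ≤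
      u * W := by
  rcases (add_nonneg hu hv).eq_or_lt with huv | huv
  · obtain ⟨rfl, rfl⟩ : u = 0 ∧ v = 0 := by constructor <;> linarith
    simp [zero_rpow ha]
  · rw [← add_mul_levelGain_div hv huv]
    have := hW (u / (u + v)) (by positivity) (div_le_one_of_le₀ (by linarith) huv.le)
    calc (u + v) * levelGain a μ (u / (u + v)) ≤ (u + v) * (u / (u + v) * W) := by gcongr
      _ = u * W := by field_simp

end LevelGain

/- The weight `c` makes the statement stable under dropping the bottom level `y 0`: the shifted
sequence `y ∘ succ` carries the weights `k + 1 + (c + 1)`. -/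
theorem weightedGap_add_entropy_le {a μ W : ℝ} (ha : 0 < a) (ha1 : a < 1)
    (hsplit : ∀ u v : ℝ, 0 ≤ u → 0 ≤ v →
      μ * (negMulLog u + negMulLog v - negMulLog (u + v)) + ((u + v) ^ (1 - a) * v ^ a - v) ≤
        u * W)
    (N : ℕ) (c : ℝ) (hc : 0 ≤ c) (y : ℕ → ℝ) (hy : ∀ n, 0 ≤ y n) :
    ∑ k ∈ Finset.range N, ((k : ℝ) + 1 + c) * (y (k + 1) ^ a * y k ^ (1 - a) - y (k + 1)) +
        μ * ∑ n ∈ Finset.range (N + 1), negMulLog (y n) ≤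
      c * ((∑ n ∈ Finset.range (N + 1), y n) ^ (1 - a) *
            (∑ n ∈ Finset.range (N + 1), y n - y 0) ^ a -
          (∑ n ∈ Finset.range (N + 1), y n - y 0)) +
        μ * negMulLog (∑ n ∈ Finset.range (N + 1), y n) +
          (∑ n ∈ Finset.range (N + 1), y n) * W := by
  induction N generalizing c y with
  | zero =>
    simpa [zero_rpow ha.ne'] using hsplit (y 0) 0 (hy 0) le_rfl
  | succ N ih =>
    set M := ∑ n ∈ Finset.range (N + 1), y (n + 1)
    have hM : ∑ n ∈ Finset.range (N + 2), y n = y 0 + M := by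
      rw [Finset.sum_range_succ', add_comm]
    have hy1 : y 1 ≤ M := Finset.single_le_sum (f := fun n => y (n + 1)) (fun n _ => hy _)
      (Finset.mem_range.2 N.succ_pos)
    have hih := ih (c + 1) (by linarith) (fun n => y (n + 1)) (fun n => hy _)
    simp only [zero_add] at hih
    have hM0 : 0 ≤ M := Finset.sum_nonneg fun n _ => hy _
    have hholder := rpow_mul_rpow_add_le ha ha1 (hy 0) (hy 1) hM0 (sub_nonneg.2 hy1)
    have hsp := hsplit (y 0) M (hy 0) hM0
    rw [add_sub_cancel] at hholder
    rw [Finset.sum_range_succ', Finset.sum_range_succ' (fun n => negMulLog (y n)), hM,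
      add_sub_cancel_left, Finset.sum_congr rfl fun k _ => by
        rw [show ((↑(k + 1) : ℝ) + 1 + c) = k + 1 + (c + 1) by push_cast; ring]]
    linear_combination hih + (c + 1) * hholder + hsp

theorem Fa_eq_sum_range {a : ℝ} (ha : a ≠ 0) (N : ℕ) {x : ℕ → ℝ} (hx : ∀ n, 0 ≤ x n) :
    Fa a N x = ∑ k ∈ Finset.range N, ((k : ℝ) + 1) *
      ((x (k + 1) ^ (1 / a)) ^ a * (x k ^ (1 / a)) ^ (1 - a) - x (k + 1) ^ (1 / a)) := by
  rw [Fa, ← Finset.Ico_add_one_right_eq_Icc, Finset.sum_Ico_eq_sum_range]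
  refine Finset.sum_congr (by simp) fun k _ => ?_
  rw [add_comm 1 k, Nat.add_sub_cancel, abs_of_nonneg (hx _), abs_of_nonneg (hx _),
    ← rpow_mul (hx _), ← rpow_mul (hx _), one_div_mul_cancel ha, rpow_one]
  push_cast
  ring_nf

theorem logSobolev_attenuator (a z : ℝ) (ha : 0 < a) (ha1 : a < 1)
    (hz : 0 < z) (hz1 : z < 1) (N : ℕ) (x : ℕ → ℝ) (hx : ∀ n, 0 ≤ x n)
    (hsum : ∑ n ∈ Finset.range (N + 1), x n ^ (1 / a) = 1) :
    Fa a N x + mu z a * Sa a N x ≤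
      ((z ^ (1 / a)) ^ a - z ^ (1 / a)) / (1 - z ^ (1 / a)) +
        mu z a * (-Real.log (1 - z ^ (1 / a)) -
          z ^ (1 / a) * Real.log (z ^ (1 / a)) / (1 - z ^ (1 / a))) := by
  set ξ := z ^ (1 / a)
  have hξ0 : 0 < ξ := rpow_pos_of_pos hz _
  have hξ1 : ξ < 1 := rpow_lt_one hz.le hz1 (by positivity)
  have hS : Sa a N x = ∑ n ∈ Finset.range (N + 1), negMulLog (x n ^ (1 / a)) := by
    simp [Sa, negMulLog, abs_of_nonneg (hx _)]
  have hbound := weightedGap_add_entropy_le ha ha1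
    (fun u v hu hv => levelGain_homogenized_le ha.ne'
      (fun t ht0 ht1 => levelGain_le_mul_div ha ha1 hξ0 hξ1 ht0 ht1) hu hv)
    N 0 le_rfl (fun n => x n ^ (1 / a)) (fun n => rpow_nonneg (hx n) _)
  rw [Fa_eq_sum_range ha.ne' N hx, hS, mu_eq_muRatio ha.ne' hz, ← levelGain_one_sub_div hξ1.ne]
  simp only [add_zero, zero_mul, zero_add, hsum, negMulLog_one, mul_zero, one_mul] at hbound
  exact hbound
end

section
/- Let 0 < a < 1, N ∈ ℕ, and let x = (x_0,…,x_N) ∈ ℝ^{N+1} satisfy ∑_{n=0}^N |x_n|^{1/a} = 1. Then F_a(x) ≤ 1 − a. -/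
open Finset Real

lemma mul_rpow_le_young {a u w : ℝ} (ha : 0 < a) (ha1 : a ≤ 1) (hu : 0 ≤ u) (hw : 0 ≤ w) :
    u * w ^ ((1 - a) / a) ≤ a * u ^ (1 / a) + (1 - a) * w ^ (1 / a) := by
  have hu' : (u ^ (1 / a)) ^ a = u := by
    rw [← rpow_mul hu, one_div_mul_cancel ha.ne', rpow_one]
  have hw' : (w ^ (1 / a)) ^ (1 - a) = w ^ ((1 - a) / a) := by
    rw [← rpow_mul hw, one_div_mul_eq_div]
  simpa only [hu', hw'] using geom_mean_le_arith_mean2_weighted ha.le (sub_nonneg.2 ha1)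
    (rpow_nonneg hu (1 / a)) (rpow_nonneg hw (1 / a)) (add_sub_cancel a 1)

lemma mul_sub_rpow_le {a y z : ℝ} (ha : 0 < a) (ha1 : a ≤ 1) :
    y * |z| ^ ((1 - a) / a) - |y| ^ (1 / a) ≤ (1 - a) * (|z| ^ (1 / a) - |y| ^ (1 / a)) := by
  have hy : y * |z| ^ ((1 - a) / a) ≤ |y| * |z| ^ ((1 - a) / a) :=
    mul_le_mul_of_nonneg_right (le_abs_self y) (rpow_nonneg (abs_nonneg z) _)
  linarith [mul_rpow_le_young ha ha1 (abs_nonneg y) (abs_nonneg z)]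

lemma sum_Icc_natCast_mul_sub_pred {R : Type*} [CommRing R] (v : ℕ → R) (N : ℕ) :
    ∑ n ∈ Icc 1 N, (n : R) * (v (n - 1) - v n) = ∑ n ∈ range (N + 1), v n - (N + 1) * v N := by
  induction N with
  | zero => simp
  | succ k ih =>
    rw [sum_Icc_succ_top (Nat.le_add_left 1 k), ih, sum_range_succ _ (k + 1), Nat.add_sub_cancel]
    push_cast
    ring

lemma sum_Icc_natCast_mul_sub_pred_le {v : ℕ → ℝ} (hv : ∀ n, 0 ≤ v n) (N : ℕ) :
    ∑ n ∈ Icc 1 N, (n : ℝ) * (v (n - 1) - v n) ≤ ∑ n ∈ range (N + 1), v n := by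
  rw [sum_Icc_natCast_mul_sub_pred]
  have : 0 ≤ ((N : ℝ) + 1) * v N := mul_nonneg (by positivity) (hv N)
  linarith

lemma Fa_le_mul_sum {a : ℝ} (ha : 0 < a) (ha1 : a ≤ 1) (N : ℕ) (x : ℕ → ℝ) :
    Fa a N x ≤ (1 - a) * ∑ n ∈ range (N + 1), |x n| ^ (1 / a) := by
  set v : ℕ → ℝ := fun n => |x n| ^ (1 / a)
  calc Fa a N x ≤ ∑ n ∈ Icc 1 N, (1 - a) * ((n : ℝ) * (v (n - 1) - v n)) := by
        refine sum_le_sum fun n _ => ?_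
        rw [mul_left_comm]
        exact mul_le_mul_of_nonneg_left (mul_sub_rpow_le ha ha1) n.cast_nonneg
    _ = (1 - a) * ∑ n ∈ Icc 1 N, (n : ℝ) * (v (n - 1) - v n) := (mul_sum ..).symm
    _ ≤ (1 - a) * ∑ n ∈ range (N + 1), v n :=
        mul_le_mul_of_nonneg_left
          (sum_Icc_natCast_mul_sub_pred_le (fun n => rpow_nonneg (abs_nonneg _) _) N)
          (sub_nonneg.2 ha1)

theorem Fa_le_one_sub (a : ℝ) (ha : 0 < a) (ha1 : a < 1) (N : ℕ) (x : ℕ → ℝ)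
    (hsum : ∑ n ∈ Finset.range (N + 1), |x n| ^ (1 / a) = 1) :
    Fa a N x ≤ 1 - a := by
  simpa only [hsum, mul_one] using Fa_le_mul_sum ha ha1.le N x
end

section
/- Let 0 < a < 1, N ∈ ℕ, and let x = (x_0,…,x_N) ∈ ℝ^{N+1} have nonnegative components with ∑_{n=0}^N x_n^{1/a} = 1. Then there exists ξ ∈ [0,1) such that −∑_{n=0}^N x_n^{1/a} ln(x_n^{1/a}) = S(ξ) and F_a(x) ≤ (ξ^a − ξ)/(1−ξ), where (ξ^a − ξ)/(1−ξ) is interpreted as 0 when ξ = 0. -/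
/-- Shannon entropy of the geometric distribution with ratio `ξ`:
`S(ξ) = -ln(1-ξ) - ξ ln ξ / (1-ξ)` (with `S(0) = 0`). -/
noncomputable def geomEntropy (ξ : ℝ) : ℝ :=
  -Real.log (1 - ξ) - ξ * Real.log ξ / (1 - ξ)

/-!
With `p n = x n ^ (1 / a)` (a probability vector) and tails `T k = ∑_{n ≥ k} p n`, summation by
parts and Hölder's inequality give `F_a(x) ≤ ∑_k (T (k+1) ^ a * T k ^ (1 - a) - T (k+1))`. Put
`f(s) = (s ^ a - s) / (1 - s)` and choose `μ = f'(ξ) / S'(ξ)`: since `f' / S'` is decreasing,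
`f - μ S` is maximal at `ξ` on `[0, 1)`. Multiplying by `1 - s`, this says
`s ^ a - s ≤ c (1 - s) + μ h(s)` with `h` the binary entropy and `c = f(ξ) - μ S(ξ)`; applied with
`s = T (k+1) / T k` and homogenized, the entropy terms telescope (chain rule for entropy) to
`F_a(x) ≤ c + μ H(p) = f(ξ)` once `S(ξ) = H(p)`. Zero entropy means a point mass, and then
`F_a(x) ≤ 0`.
-/

open Finset Real

noncomputable def geomBound (a ξ : ℝ) : ℝ := (ξ ^ a - ξ) / (1 - ξ)

/-- The ratio of the derivatives of `geomBound a` and `geomEntropy` (see `hasDerivAt_geomBound`). -/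
noncomputable def entropySlope (a s : ℝ) : ℝ := (a * s ^ (a - 1) + (1 - a) * s ^ a - 1) / -log s

lemma geomEntropy_zero : geomEntropy 0 = 0 := by simp [geomEntropy]

lemma one_sub_mul_geomEntropy {s : ℝ} (hs : s ≠ 1) : (1 - s) * geomEntropy s = binEntropy s := by
  have : 1 - s ≠ 0 := sub_ne_zero.mpr hs.symm
  rw [binEntropy_eq_negMulLog_add_negMulLog_one_sub, geomEntropy, negMulLog, negMulLog]
  field_simp
  ring

lemma continuousOn_geomEntropy : ContinuousOn geomEntropy (Set.Iio 1) := by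
  have hne : ∀ s ∈ Set.Iio (1 : ℝ), 1 - s ≠ 0 := fun _ hs => (sub_pos.mpr hs).ne'
  exact ((continuousOn_const.sub continuousOn_id).log hne).neg.sub
    (continuous_mul_log.continuousOn.div (continuousOn_const.sub continuousOn_id) hne)

lemma hasDerivAt_geomEntropy {s : ℝ} (hs0 : s ≠ 0) (hs1 : s ≠ 1) :
    HasDerivAt geomEntropy (-log s / (1 - s) ^ 2) s := by
  have hne : 1 - s ≠ 0 := sub_ne_zero.mpr hs1.symm
  have hden : HasDerivAt (fun u : ℝ => 1 - u) (-1) s := by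
    simpa using (hasDerivAt_id s).const_sub 1
  refine ((hden.log hne).neg.sub ((hasDerivAt_mul_log hs0).div hden hne)).congr_deriv ?_
  field_simp
  ring

lemma exists_mem_Ico_geomEntropy_eq {H : ℝ} (hH : 0 ≤ H) :
    ∃ ξ ∈ Set.Ico (0 : ℝ) 1, geomEntropy ξ = H := by
  set ξ₀ := 1 - exp (-H)
  have hξ₀ : ξ₀ < 1 := by simp only [ξ₀]; linarith [exp_pos (-H)]
  have hξ₀0 : 0 ≤ ξ₀ := by simp only [ξ₀]; linarith [exp_le_one_iff.mpr (neg_nonpos.mpr hH)]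
  have hH_le : H ≤ geomEntropy ξ₀ := by
    have : ξ₀ * log ξ₀ / (1 - ξ₀) ≤ 0 :=
      div_nonpos_of_nonpos_of_nonneg (mul_log_nonpos hξ₀0 hξ₀.le) (by linarith)
    have hlog : log (1 - ξ₀) = -H := by simp [ξ₀]
    rw [geomEntropy, hlog]
    linarith
  obtain ⟨ξ, hξ, hξH⟩ := intermediate_value_Icc hξ₀0
    (continuousOn_geomEntropy.mono fun u hu => hu.2.trans_lt hξ₀)
    (show H ∈ Set.Icc (geomEntropy 0) (geomEntropy ξ₀) from ⟨by rwa [geomEntropy_zero], hH_le⟩)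
  exact ⟨ξ, ⟨hξ.1, hξ.2.trans_lt hξ₀⟩, hξH⟩

lemma continuousOn_geomBound {a : ℝ} (ha : 0 ≤ a) : ContinuousOn (geomBound a) (Set.Iio 1) :=
  ((continuous_rpow_const ha).continuousOn.sub continuousOn_id).div
    (continuousOn_const.sub continuousOn_id) fun _ hs => (sub_pos.mpr hs).ne'

lemma hasDerivAt_geomBound (a : ℝ) {s : ℝ} (hs0 : 0 < s) (hs1 : s ≠ 1) :
    HasDerivAt (geomBound a) (entropySlope a s * (-log s / (1 - s) ^ 2)) s := by
  have hne : 1 - s ≠ 0 := sub_ne_zero.mpr hs1.symm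
  have hlog : log s ≠ 0 := log_ne_zero_of_pos_of_ne_one hs0 hs1
  have hden : HasDerivAt (fun u : ℝ => 1 - u) (-1) s := by
    simpa using (hasDerivAt_id s).const_sub 1
  refine (((hasDerivAt_rpow_const (p := a) (Or.inl hs0.ne')).sub (hasDerivAt_id' s)).div
    hden hne).congr_deriv ?_
  have hss : s ^ a = s ^ (a - 1) * s := by
    rw [← rpow_add_one hs0.ne']; ring_nf
  simp only [entropySlope, Pi.sub_apply]
  rw [hss]
  field_simp
  ring

section Slope

variable {a : ℝ}

lemma integral_mul_rpow_sub_rpow (ha : 0 < a) (ha1 : a < 1) {s : ℝ} (hs : 0 < s) :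
    ∫ t in s..1, a * (1 - a) * (t ^ (a - 2) - t ^ (a - 1))
      = a * s ^ (a - 1) + (1 - a) * s ^ a - 1 := by
  have h0 : (0 : ℝ) ∉ Set.uIcc s 1 := Set.notMem_uIcc_of_lt hs one_pos
  rw [intervalIntegral.integral_const_mul, intervalIntegral.integral_sub
      (intervalIntegral.intervalIntegrable_rpow (Or.inr h0))
      (intervalIntegral.intervalIntegrable_rpow (Or.inr h0)),
    integral_rpow (Or.inr ⟨by linarith, h0⟩), integral_rpow (Or.inl (by linarith))]
  have : a - 1 ≠ 0 := by linarith
  simp only [show a - 2 + 1 = a - 1 by ring, show a - 1 + 1 = a by ring, one_rpow]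
  field_simp
  ring

lemma rpow_sub_one_mul_one_sub_le_of_le (ha1 : a ≤ 1) {s t : ℝ} (hs : 0 < s) (hst : s ≤ t)
    (ht : t ≤ 1) : t ^ (a - 1) * (1 - t) ≤ s ^ (a - 1) * (1 - s) :=
  mul_le_mul (rpow_le_rpow_of_nonpos hs hst (by linarith)) (by linarith) (by linarith)
    (rpow_pos_of_pos hs _).le

/-- Integrate `a (1 - a) t ^ (a - 2) (1 - t) ≤ a (1 - a) s ^ (a - 1) (1 - s) / t` over `[s, 1]`. -/
lemma mul_rpow_add_mul_rpow_sub_one_le (ha : 0 < a) (ha1 : a < 1) {s : ℝ} (hs : 0 < s)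
    (hs1 : s < 1) :
    a * s ^ (a - 1) + (1 - a) * s ^ a - 1 ≤ a * (1 - a) * s ^ (a - 1) * (1 - s) * -log s := by
  have h0' : (0 : ℝ) ∉ Set.uIcc s 1 := Set.notMem_uIcc_of_lt hs one_pos
  have h0 : ∀ t ∈ Set.uIcc s 1, t ≠ 0 := fun t ht h => h0' (h ▸ ht)
  have hpt : ∀ t ∈ Set.Icc s 1, a * (1 - a) * (t ^ (a - 2) - t ^ (a - 1))
      ≤ a * (1 - a) * s ^ (a - 1) * (1 - s) * t⁻¹ := by
    intro t ht
    have ht0 : 0 < t := hs.trans_le ht.1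
    have hsplit : t ^ (a - 2) - t ^ (a - 1) = t ^ (a - 1) * (1 - t) * t⁻¹ := by
      rw [show a - 2 = a - 1 - 1 by ring, rpow_sub_one ht0.ne']
      field_simp
    have hc : 0 ≤ a * (1 - a) * t⁻¹ :=
      mul_nonneg (mul_nonneg ha.le (by linarith)) (inv_nonneg.mpr ht0.le)
    calc a * (1 - a) * (t ^ (a - 2) - t ^ (a - 1))
        = a * (1 - a) * t⁻¹ * (t ^ (a - 1) * (1 - t)) := by rw [hsplit]; ring
      _ ≤ a * (1 - a) * t⁻¹ * (s ^ (a - 1) * (1 - s)) :=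
        mul_le_mul_of_nonneg_left (rpow_sub_one_mul_one_sub_le_of_le ha1.le hs ht.1 ht.2) hc
      _ = a * (1 - a) * s ^ (a - 1) * (1 - s) * t⁻¹ := by ring
  have hf : IntervalIntegrable (fun t => a * (1 - a) * (t ^ (a - 2) - t ^ (a - 1)))
      MeasureTheory.volume s 1 :=
    ((intervalIntegral.intervalIntegrable_rpow (Or.inr h0')).sub
      (intervalIntegral.intervalIntegrable_rpow (Or.inr h0'))).const_mul _
  have hint := intervalIntegral.integral_mono_on hs1.le hf
    ((intervalIntegral.intervalIntegrable_inv h0 continuousOn_id).const_mul _) hpt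
  rwa [integral_mul_rpow_sub_rpow ha ha1 hs, intervalIntegral.integral_const_mul,
    integral_inv h0', one_div, log_inv] at hint

lemma antitoneOn_entropySlope (ha : 0 < a) (ha1 : a < 1) :
    AntitoneOn (entropySlope a) (Set.Ioo 0 1) := by
  have hderiv : ∀ s ∈ Set.Ioo (0 : ℝ) 1, HasDerivAt (entropySlope a)
      ((-(a * (1 - a) * s ^ (a - 2) * (1 - s)) * -log s
        - (a * s ^ (a - 1) + (1 - a) * s ^ a - 1) * -s⁻¹) / (-log s) ^ 2) s := by
    intro s ⟨hs0, hs1⟩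
    have hnum : HasDerivAt (fun u => a * u ^ (a - 1) + (1 - a) * u ^ a - 1)
        (-(a * (1 - a) * s ^ (a - 2) * (1 - s))) s := by
      refine ((((hasDerivAt_rpow_const (Or.inl hs0.ne')).const_mul a).add
        ((hasDerivAt_rpow_const (Or.inl hs0.ne')).const_mul (1 - a))).sub_const 1).congr_deriv ?_
      rw [show a - 1 - 1 = a - 2 by ring, show a - 1 = a - 2 + 1 by ring, rpow_add_one hs0.ne']
      ring
    have hden : HasDerivAt (fun u => -log u) (-s⁻¹) s := (hasDerivAt_log hs0.ne').neg
    exact hnum.div hden (by linarith [log_neg hs0 hs1])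
  refine antitoneOn_of_hasDerivWithinAt_nonpos (convex_Ioo 0 1)
    (fun s hs => (hderiv s hs).continuousAt.continuousWithinAt)
    (fun s hs => (hderiv s (interior_subset hs)).hasDerivWithinAt) fun s hs => ?_
  rw [interior_Ioo] at hs
  obtain ⟨hs0, hs1⟩ := hs
  have hpow : s ^ (a - 1) = s ^ (a - 2) * s := by
    rw [show a - 1 = a - 2 + 1 by ring, rpow_add_one hs0.ne']
  have hkey : (a * s ^ (a - 1) + (1 - a) * s ^ a - 1) * s⁻¹
      ≤ a * (1 - a) * s ^ (a - 2) * (1 - s) * -log s :=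
    calc _ ≤ a * (1 - a) * s ^ (a - 1) * (1 - s) * -log s * s⁻¹ :=
          mul_le_mul_of_nonneg_right (mul_rpow_add_mul_rpow_sub_one_le ha ha1 hs0 hs1)
            (inv_nonneg.mpr hs0.le)
      _ = _ := by rw [hpow]; field_simp
  apply div_nonpos_of_nonpos_of_nonneg _ (sq_nonneg _)
  linarith

lemma geomBound_sub_mul_geomEntropy_le (ha : 0 < a) (ha1 : a < 1) {ξ s : ℝ} (hξ0 : 0 < ξ)
    (hξ1 : ξ < 1) (hs0 : 0 ≤ s) (hs1 : s < 1) :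
    geomBound a s - entropySlope a ξ * geomEntropy s
      ≤ geomBound a ξ - entropySlope a ξ * geomEntropy ξ := by
  set Φ := fun u => geomBound a u - entropySlope a ξ * geomEntropy u
  set Φ' := fun u => (entropySlope a u - entropySlope a ξ) * (-log u / (1 - u) ^ 2)
  have hderiv : ∀ u ∈ Set.Ioo (0 : ℝ) 1, HasDerivAt Φ (Φ' u) u := by
    intro u ⟨hu0, hu1⟩
    refine ((hasDerivAt_geomBound a hu0 hu1.ne).sub
      ((hasDerivAt_geomEntropy hu0.ne' hu1.ne).const_mul _)).congr_deriv ?_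
    ring
  have hcont : ContinuousOn Φ (Set.Iio 1) :=
    (continuousOn_geomBound ha.le).sub (continuousOn_const.mul continuousOn_geomEntropy)
  have hS' : ∀ u ∈ Set.Ioo (0 : ℝ) 1, 0 ≤ -log u / (1 - u) ^ 2 := fun u ⟨hu0, hu1⟩ =>
    div_nonneg (neg_nonneg.mpr (log_nonpos hu0.le hu1.le)) (sq_nonneg _)
  rcases le_total s ξ with hsξ | hξs
  · refine monotoneOn_of_hasDerivWithinAt_nonneg (f' := Φ') (convex_Icc 0 ξ)
      (hcont.mono fun u hu => hu.2.trans_lt hξ1) (fun u hu => ?_) (fun u hu => ?_)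
      ⟨hs0, hsξ⟩ ⟨hξ0.le, le_rfl⟩ hsξ <;> rw [interior_Icc] at hu
    · exact (hderiv u ⟨hu.1, hu.2.trans hξ1⟩).hasDerivWithinAt
    · exact mul_nonneg (sub_nonneg.mpr (antitoneOn_entropySlope ha ha1 ⟨hu.1, hu.2.trans hξ1⟩
        ⟨hξ0, hξ1⟩ hu.2.le)) (hS' u ⟨hu.1, hu.2.trans hξ1⟩)
  · refine antitoneOn_of_hasDerivWithinAt_nonpos (f' := Φ') (convex_Ico ξ 1)
      (hcont.mono fun u hu => hu.2) (fun u hu => ?_) (fun u hu => ?_)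
      ⟨le_rfl, hξ1⟩ ⟨hξs, hs1⟩ hξs <;> rw [interior_Ico] at hu
    · exact (hderiv u ⟨hξ0.trans hu.1, hu.2⟩).hasDerivWithinAt
    · exact mul_nonpos_of_nonpos_of_nonneg (sub_nonpos.mpr (antitoneOn_entropySlope ha ha1
        ⟨hξ0, hξ1⟩ ⟨hξ0.trans hu.1, hu.2⟩ hu.1.le)) (hS' u ⟨hξ0.trans hu.1, hu.2⟩)

end Slope

lemma rpow_sub_self_le_mul_one_sub_add_mul_binEntropy {a ξ s : ℝ} (ha : 0 < a) (ha1 : a < 1)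
    (hξ0 : 0 < ξ) (hξ1 : ξ < 1) (hs : s ∈ Set.Icc (0 : ℝ) 1) :
    s ^ a - s ≤ (geomBound a ξ - entropySlope a ξ * geomEntropy ξ) * (1 - s)
      + entropySlope a ξ * binEntropy s := by
  rcases hs.2.eq_or_lt with rfl | hs1
  · simp
  have hs1' : 0 < 1 - s := sub_pos.mpr hs1
  have hmax := mul_le_mul_of_nonneg_left
    (geomBound_sub_mul_geomEntropy_le ha ha1 hξ0 hξ1 hs.1 hs1) hs1'.le
  rwa [mul_sub, geomBound, mul_div_cancel₀ _ hs1'.ne', mul_left_comm,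
    one_sub_mul_geomEntropy hs1.ne, sub_le_iff_le_add, mul_comm (1 - s)] at hmax

lemma rpow_mul_rpow_one_sub_sub_le {a c μ : ℝ}
    (h : ∀ s ∈ Set.Icc (0 : ℝ) 1, s ^ a - s ≤ c * (1 - s) + μ * binEntropy s)
    {t T : ℝ} (ht : 0 ≤ t) (htT : t ≤ T) :
    t ^ a * T ^ (1 - a) - t
      ≤ c * (T - t) + μ * (negMulLog t + negMulLog (T - t) - negMulLog T) := by
  have hT : 0 ≤ T := ht.trans htT
  obtain ⟨s, hs, rfl⟩ : ∃ s ∈ Set.Icc (0 : ℝ) 1, t = s * T := by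
    rcases hT.eq_or_lt with rfl | hT0
    · exact ⟨0, ⟨le_rfl, zero_le_one⟩, by linarith⟩
    · exact ⟨t / T, ⟨div_nonneg ht hT, div_le_one_of_le₀ htT hT⟩, by field_simp⟩
  have hpow : (s * T) ^ a * T ^ (1 - a) = s ^ a * T := by
    rw [mul_rpow hs.1 hT, mul_assoc, ← rpow_add' hT (by norm_num)]
    norm_num
  calc (s * T) ^ a * T ^ (1 - a) - s * T = T * (s ^ a - s) := by rw [hpow]; ring
    _ ≤ T * (c * (1 - s) + μ * binEntropy s) := mul_le_mul_of_nonneg_left (h s hs) hT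
    _ = _ := by
      rw [binEntropy_eq_negMulLog_add_negMulLog_one_sub, show T - s * T = (1 - s) * T by ring,
        negMulLog_mul, negMulLog_mul]
      ring

lemma sum_rpow_mul_rpow_one_sub_le {ι : Type*} (s : Finset ι) {a : ℝ} (ha : 0 < a) (ha1 : a < 1)
    {u v : ι → ℝ} (hu : ∀ i ∈ s, 0 ≤ u i) (hv : ∀ i ∈ s, 0 ≤ v i) :
    ∑ i ∈ s, u i ^ a * v i ^ (1 - a) ≤ (∑ i ∈ s, u i) ^ a * (∑ i ∈ s, v i) ^ (1 - a) := by
  have hholder := inner_le_Lp_mul_Lq_of_nonneg s (HolderConjugate.inv_one_sub_inv ha ha1)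
    (fun i hi => rpow_nonneg (hu i hi) a) (fun i hi => rpow_nonneg (hv i hi) (1 - a))
  have h1a : 1 - a ≠ 0 := by linarith
  rwa [sum_congr rfl fun i hi => rpow_rpow_inv (hu i hi) ha.ne',
    sum_congr rfl fun i hi => rpow_rpow_inv (hv i hi) h1a, one_div, one_div, inv_inv, inv_inv]
    at hholder

lemma rpow_mul_rpow_one_sub_sub_nonpos {a u v : ℝ} (ha0 : a ≠ 0) (ha1 : a ≤ 1)
    (hu : u = 0 ∨ u = 1) (hv0 : 0 ≤ v) (hv1 : v ≤ 1) : u ^ a * v ^ (1 - a) - u ≤ 0 := by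
  rcases hu with rfl | rfl
  · simp [zero_rpow ha0]
  · simpa using rpow_le_one hv0 hv1 (by linarith)

lemma eq_zero_or_eq_one_of_sum_negMulLog_eq_zero {ι : Type*} {s : Finset ι} {p : ι → ℝ}
    (hp0 : ∀ i ∈ s, 0 ≤ p i) (hp1 : ∀ i ∈ s, p i ≤ 1) (h : ∑ i ∈ s, negMulLog (p i) = 0) :
    ∀ i ∈ s, p i = 0 ∨ p i = 1 := by
  intro i hi
  have hi0 := (sum_eq_zero_iff_of_nonneg fun j hj => negMulLog_nonneg (hp0 j hj) (hp1 j hj)).mp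
    h i hi
  rw [negMulLog, neg_mul, neg_eq_zero, mul_eq_zero, log_eq_zero] at hi0
  rcases hi0 with h0 | h0 | h1 | hneg
  · exact Or.inl h0
  · exact Or.inl h0
  · exact Or.inr h1
  · linarith [hp0 i hi]

noncomputable def tailSum (p : ℕ → ℝ) (N k : ℕ) : ℝ := ∑ n ∈ Ico k (N + 1), p n

section TailSum

variable {p : ℕ → ℝ} {N : ℕ}

lemma tailSum_zero : tailSum p N 0 = ∑ n ∈ range (N + 1), p n := by
  rw [tailSum, range_eq_Ico]

lemma tailSum_succ_self : tailSum p N (N + 1) = 0 := by simp [tailSum]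

lemma tailSum_eq_add {k : ℕ} (hk : k ≤ N) : tailSum p N k = p k + tailSum p N (k + 1) :=
  sum_eq_sum_Ico_succ_bot (Nat.lt_succ_of_le hk) p

lemma tailSum_nonneg (hp : ∀ n, 0 ≤ p n) (k : ℕ) : 0 ≤ tailSum p N k :=
  sum_nonneg fun n _ => hp n

lemma sum_Ico_mul_rpow_mul_rpow_sub_le {a : ℝ} (ha : 0 < a) (ha1 : a < 1) (hp : ∀ n, 0 ≤ p n)
    (k : ℕ) : ∑ n ∈ Ico k N, (p (n + 1) ^ a * p n ^ (1 - a) - p (n + 1))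
      ≤ tailSum p N (k + 1) ^ a * tailSum p N k ^ (1 - a) - tailSum p N (k + 1) := by
  have hshift : ∑ n ∈ Ico k N, p (n + 1) = tailSum p N (k + 1) := sum_Ico_add' p k N 1
  have hsub : ∑ n ∈ Ico k N, p n ≤ tailSum p N k :=
    sum_le_sum_of_subset_of_nonneg (Ico_subset_Ico_right N.le_succ) fun n _ _ => hp n
  rw [sum_sub_distrib, hshift, sub_le_sub_iff_right]
  calc ∑ n ∈ Ico k N, p (n + 1) ^ a * p n ^ (1 - a)
      ≤ (∑ n ∈ Ico k N, p (n + 1)) ^ a * (∑ n ∈ Ico k N, p n) ^ (1 - a) :=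
        sum_rpow_mul_rpow_one_sub_le _ ha ha1 (fun n _ => hp _) fun n _ => hp n
    _ ≤ tailSum p N (k + 1) ^ a * tailSum p N k ^ (1 - a) := by
        rw [hshift]
        exact mul_le_mul_of_nonneg_left
          (rpow_le_rpow (sum_nonneg fun n _ => hp n) hsub (by linarith))
          (rpow_nonneg (tailSum_nonneg hp _) a)

lemma sum_range_succ_mul_eq_sum_sum_Ico (N : ℕ) (f : ℕ → ℝ) :
    ∑ n ∈ range N, (n + 1 : ℝ) * f n = ∑ k ∈ range N, ∑ n ∈ Ico k N, f n := by
  rw [range_eq_Ico, sum_Ico_Ico_comm 0 N fun _ n => f n]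
  refine sum_congr rfl fun n _ => ?_
  rw [sum_const, Nat.card_Ico, nsmul_eq_mul]
  push_cast
  ring

lemma sum_mul_rpow_mul_rpow_sub_le_sum_tailSum {a : ℝ} (ha : 0 < a) (ha1 : a < 1)
    (hp : ∀ n, 0 ≤ p n) :
    ∑ n ∈ range N, (n + 1 : ℝ) * (p (n + 1) ^ a * p n ^ (1 - a) - p (n + 1))
      ≤ ∑ k ∈ range (N + 1),
          (tailSum p N (k + 1) ^ a * tailSum p N k ^ (1 - a) - tailSum p N (k + 1)) := by
  rw [sum_range_succ_mul_eq_sum_sum_Ico, sum_range_succ, tailSum_succ_self, zero_rpow ha.ne',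
    zero_mul, sub_zero, add_zero]
  exact sum_le_sum fun k _ => sum_Ico_mul_rpow_mul_rpow_sub_le ha ha1 hp k

lemma sum_tailSum_rpow_mul_rpow_sub_le {a c μ : ℝ} (hp : ∀ n, 0 ≤ p n)
    (h : ∀ s ∈ Set.Icc (0 : ℝ) 1, s ^ a - s ≤ c * (1 - s) + μ * binEntropy s) :
    ∑ k ∈ range (N + 1),
        (tailSum p N (k + 1) ^ a * tailSum p N k ^ (1 - a) - tailSum p N (k + 1))
      ≤ c * ∑ k ∈ range (N + 1), p k + μ * (∑ k ∈ range (N + 1), negMulLog (p k)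
          - negMulLog (∑ k ∈ range (N + 1), p k)) := by
  have hstep : ∀ k ∈ range (N + 1),
      tailSum p N (k + 1) ^ a * tailSum p N k ^ (1 - a) - tailSum p N (k + 1)
        ≤ c * p k + μ * (negMulLog (p k)
          + (negMulLog (tailSum p N (k + 1)) - negMulLog (tailSum p N k))) := by
    intro k hk
    have hsplit := tailSum_eq_add (p := p) (mem_range_succ_iff.mp hk)
    have hbound := rpow_mul_rpow_one_sub_sub_le h (tailSum_nonneg hp (k + 1))
      (show tailSum p N (k + 1) ≤ tailSum p N k by linarith [hp k])
    rw [show tailSum p N k - tailSum p N (k + 1) = p k by linarith] at hbound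
    linarith
  refine (sum_le_sum hstep).trans_eq ?_
  rw [sum_add_distrib, ← mul_sum, ← mul_sum, sum_add_distrib,
    sum_range_sub (fun k => negMulLog (tailSum p N k)), tailSum_succ_self, tailSum_zero,
    negMulLog_zero]
  ring

end TailSum

lemma Fa_rpow_eq {a : ℝ} (ha : a ≠ 0) {p : ℕ → ℝ} (hp : ∀ n, 0 ≤ p n) (N : ℕ) :
    Fa a N (fun n => p n ^ a)
      = ∑ n ∈ range N, (n + 1 : ℝ) * (p (n + 1) ^ a * p n ^ (1 - a) - p (n + 1)) := by
  have hshift := sum_Ico_add'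
    (fun n : ℕ => (n : ℝ) * (p n ^ a * |p (n - 1) ^ a| ^ ((1 - a) / a) - |p n ^ a| ^ (1 / a))) 0 N 1
  rw [zero_add, Ico_add_one_right_eq_Icc, ← range_eq_Ico] at hshift
  rw [Fa, ← hshift]
  refine sum_congr rfl fun n _ => ?_
  rw [abs_of_nonneg (rpow_nonneg (hp _) _), abs_of_nonneg (rpow_nonneg (hp _) _),
    ← rpow_mul (hp _), ← rpow_mul (hp _), mul_div_cancel₀ _ ha, mul_one_div_cancel ha, rpow_one,
    Nat.add_sub_cancel]
  push_cast
  ring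

theorem Fa_le_geometric_with_same_entropy (a : ℝ) (ha : 0 < a) (ha1 : a < 1)
    (N : ℕ) (x : ℕ → ℝ) (hx : ∀ n, 0 ≤ x n)
    (hsum : ∑ n ∈ Finset.range (N + 1), x n ^ (1 / a) = 1) :
    ∃ ξ ∈ Set.Ico (0 : ℝ) 1,
      (-∑ n ∈ Finset.range (N + 1), x n ^ (1 / a) * Real.log (x n ^ (1 / a))
          = geomEntropy ξ) ∧
      Fa a N x ≤ (ξ ^ a - ξ) / (1 - ξ) := by
  set p : ℕ → ℝ := fun n => x n ^ (1 / a)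
  have hp : ∀ n, 0 ≤ p n := fun n => rpow_nonneg (hx n) _
  have hp1 : ∀ n ∈ range (N + 1), p n ≤ 1 := fun n hn =>
    hsum ▸ single_le_sum (fun m _ => hp m) hn
  have hx_eq : x = fun n => p n ^ a :=
    funext fun n => by rw [← rpow_mul (hx n), one_div_mul_cancel ha.ne', rpow_one]
  have hH : -∑ n ∈ range (N + 1), p n * log (p n) = ∑ n ∈ range (N + 1), negMulLog (p n) := by
    simp only [negMulLog, neg_mul, sum_neg_distrib]
  obtain ⟨ξ, hξ, hSξ⟩ := exists_mem_Ico_geomEntropy_eq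
    (sum_nonneg fun n hn => negMulLog_nonneg (hp n) (hp1 n hn))
  refine ⟨ξ, hξ, hH.trans hSξ.symm, ?_⟩
  rw [hx_eq, Fa_rpow_eq ha.ne' hp]
  rcases hξ.1.eq_or_lt with rfl | hξ0
  · have h01 := eq_zero_or_eq_one_of_sum_negMulLog_eq_zero (fun n _ => hp n) hp1
      (hSξ.symm.trans geomEntropy_zero)
    rw [zero_rpow ha.ne', sub_zero, zero_div]
    refine sum_nonpos fun n hn => mul_nonpos_of_nonneg_of_nonpos (by positivity) ?_
    have hn : n < N := mem_range.mp hn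
    exact rpow_mul_rpow_one_sub_sub_nonpos ha.ne' ha1.le (h01 _ (mem_range.mpr (by omega))) (hp n)
      (hp1 n (mem_range.mpr (by omega)))
  · calc _ ≤ _ := sum_mul_rpow_mul_rpow_sub_le_sum_tailSum ha ha1 hp
      _ ≤ _ := sum_tailSum_rpow_mul_rpow_sub_le hp
          fun s hs => rpow_sub_self_le_mul_one_sub_add_mul_binEntropy ha ha1 hξ0 hξ.2 hs
      _ = (ξ ^ a - ξ) / (1 - ξ) := by
        rw [hsum, negMulLog_one, hSξ, geomBound]
        ring
end

section
/- For any real numbers 1 < p < q and any T > 0, there exist z₀ ∈ (0,1) and a differentiable function a : [0,T] → ℝ such that 0 < a(t) < 1 for all t ∈ [0,T], a(0) = 1/p, a(T) = 1/q, and a′(t) = μ(z(t), a(t)) for all t ∈ [0,T], where z(t) = e^{−t} z₀ / (1 − (1 − e^{−t}) z₀). -/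
open Real Set Filter Topology

theorem exists_mem_Ioo_eq_zero_of_hasDerivAt_pos {f : ℝ → ℝ} {a b d : ℝ} (hab : a < b)
    (hf : ContinuousOn f (Icc a b)) (ha : f a = 0) (hd : HasDerivAt f d a) (hd0 : 0 < d)
    (hb : f b < 0) : ∃ c ∈ Ioo a b, f c = 0 := by
  have hslope : Tendsto (slope f a) (𝓝[>] a) (𝓝 d) :=
    (hasDerivAt_iff_tendsto_slope.mp hd).mono_left (nhdsWithin_mono _ fun x hx => ne_of_gt hx)
  obtain ⟨s, hs, hsab⟩ := ((hslope.eventually_const_lt hd0).and (Ioo_mem_nhdsGT hab)).exists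
  have hfs : 0 < f s := by
    rwa [slope_def_field, ha, sub_zero, div_pos_iff_of_pos_right (sub_pos.2 hsab.1)] at hs
  obtain ⟨c, hc, hfc⟩ :=
    intermediate_value_Ioo' hsab.2.le (hf.mono (Icc_subset_Icc hsab.1.le le_rfl)) ⟨hb, hfs⟩
  exact ⟨c, ⟨hsab.1.trans hc.1, hc.2⟩, hfc⟩

theorem hasDerivAt_log_div_log_sub_log {V W : ℝ → ℝ} {t : ℝ} (hV : HasDerivAt V (V t - 1) t)
    (hW : HasDerivAt W (W t - 1) t) (hV0 : 0 < V t) (hW0 : 0 < W t) (hlogV : log (V t) ≠ 0)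
    (hne : log (V t) ≠ log (W t)) :
    HasDerivAt (fun s => log (V s) / (log (V s) - log (W s)))
      (mu (V t)⁻¹ (log (V t) / (log (V t) - log (W t)))) t := by
  have hP := hV.log hV0.ne'
  have hQ := hW.log hW0.ne'
  have hPQ : log (V t) - log (W t) ≠ 0 := sub_ne_zero.2 hne
  refine (hP.div (hP.fun_sub hQ) hPQ).congr_deriv ?_
  have hpow : (V t)⁻¹ ^ ((log (V t) / (log (V t) - log (W t)) - 1) /
      (log (V t) / (log (V t) - log (W t)))) = (W t)⁻¹ := by
    rw [rpow_def_of_pos (inv_pos.2 hV0), log_inv, ← exp_log hW0, ← exp_neg, log_exp]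
    congr 1
    field_simp
    ring
  unfold mu
  rw [hpow, log_inv]
  field_simp
  ring

/-- The solution of `v' = v - 1`, `v 0 = x`; the `z(t)` of the theorem is `(expFlow z₀⁻¹ t)⁻¹`. -/
noncomputable def expFlow (x t : ℝ) : ℝ := 1 + (x - 1) * exp t

@[simp]
theorem expFlow_zero (x : ℝ) : expFlow x 0 = x := by simp [expFlow]

theorem hasDerivAt_expFlow (x t : ℝ) : HasDerivAt (expFlow x) (expFlow x t - 1) t :=
  (((hasDerivAt_exp t).const_mul (x - 1)).const_add 1).congr_deriv (by simp [expFlow])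

theorem one_lt_expFlow {x : ℝ} (hx : 1 < x) (t : ℝ) : 1 < expFlow x t := by
  have := exp_pos t
  unfold expFlow
  nlinarith

theorem expFlow_mem_Ioo {x t T : ℝ} (hx : x < 1) (htT : t ≤ T) (hT : 0 < expFlow x T) :
    expFlow x t ∈ Ioo 0 1 := by
  have := exp_pos t
  have := exp_le_exp.2 htT
  unfold expFlow at *
  constructor <;> nlinarith

theorem inv_expFlow {x : ℝ} (hx : x ≠ 0) (t : ℝ) :
    (expFlow x t)⁻¹ = exp (-t) * x⁻¹ / (1 - (1 - exp (-t)) * x⁻¹) := by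
  rw [expFlow, exp_neg]
  field_simp
  ring

theorem div_sub_one_sub_mul_self {x r : ℝ} (hx : x ≠ 0) (hr : r ≠ 0) :
    x / (x - (1 - r) * x) = 1 / r := by
  rw [show x - (1 - r) * x = r * x by ring]
  field_simp

theorem exists_expFlow_rpow_eq {p q T : ℝ} (hp : 1 < p) (hpq : p < q) (hT : 0 < T) :
    ∃ x, 1 < x ∧ expFlow (x ^ (1 - p)) T = expFlow x T ^ (1 - q) := by
  set F : ℝ → ℝ := fun x => expFlow (x ^ (1 - p)) T - expFlow x T ^ (1 - q)
  have hc0 : 0 < 1 - exp (-T) := by simpa using hT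
  have hc1 : 1 - exp (-T) < 1 := by linarith [exp_pos (-T)]
  set b := (1 - exp (-T)) ^ (1 - p)⁻¹
  have hb : 1 < b := one_lt_rpow_of_pos_of_lt_one_of_neg hc0 hc1 (inv_lt_zero.2 (by linarith))
  have hF1 : F 1 = 0 := by simp [F, expFlow]
  have hFb : F b < 0 := by
    have : 0 < expFlow b T ^ (1 - q) := rpow_pos_of_pos (by linarith [one_lt_expFlow hb T]) _
    have hbT : expFlow (b ^ (1 - p)) T = 0 := by
      rw [rpow_inv_rpow hc0.le (by linarith), expFlow, exp_neg]
      field_simp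
      ring
    simp only [F, hbT]
    linarith
  have hd : HasDerivAt F ((1 - p) * exp T - (1 - q) * exp T) 1 := by
    have h1 : HasDerivAt (fun x => expFlow (x ^ (1 - p)) T) ((1 - p) * exp T) 1 := by
      have := (((hasDerivAt_rpow_const (p := 1 - p) (Or.inl one_ne_zero)).sub_const 1).mul_const
        (exp T)).const_add 1
      simpa [expFlow] using this
    have h2 : HasDerivAt (fun x => expFlow x T ^ (1 - q)) ((1 - q) * exp T) 1 := by
      have := ((((hasDerivAt_id (1 : ℝ)).sub_const 1).mul_const (exp T)).const_add 1).rpow_const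
        (p := 1 - q) (Or.inl (by simp))
      exact (by simpa [expFlow] using this : HasDerivAt _ _ _).congr_deriv (mul_comm _ _)
    exact h1.sub h2
  have hcont : ContinuousOn F (Icc 1 b) := by
    have hpow : ContinuousOn (fun x : ℝ => x ^ (1 - p)) (Icc 1 b) :=
      continuousOn_id.rpow_const fun x hx => Or.inl (zero_lt_one.trans_le hx.1).ne'
    have hflow : ContinuousOn (fun x => expFlow x T ^ (1 - q)) (Icc 1 b) := by
      refine ContinuousOn.rpow_const (by unfold expFlow; fun_prop) fun x hx => Or.inl ?_
      exact ne_of_gt (by unfold expFlow; nlinarith [exp_pos T, hx.1])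
    simp only [F, expFlow] at hflow ⊢
    fun_prop
  obtain ⟨x, hx, hFx⟩ := exists_mem_Ioo_eq_zero_of_hasDerivAt_pos hb hcont hF1 hd
    (by nlinarith [exp_pos T]) hFb
  exact ⟨x, hx.1, sub_eq_zero.1 hFx⟩

theorem exists_solution_ode (p q T : ℝ) (hp : 1 < p) (hpq : p < q) (hT : 0 < T) :
    ∃ z₀ ∈ Set.Ioo (0 : ℝ) 1, ∃ a : ℝ → ℝ,
      (∀ t ∈ Set.Icc (0 : ℝ) T, a t ∈ Set.Ioo (0 : ℝ) 1) ∧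
      a 0 = 1 / p ∧ a T = 1 / q ∧
      ∀ t ∈ Set.Icc (0 : ℝ) T,
        HasDerivAt a
          (mu (Real.exp (-t) * z₀ / (1 - (1 - Real.exp (-t)) * z₀)) (a t)) t := by
  obtain ⟨x, hx, hshoot⟩ := exists_expFlow_rpow_eq hp hpq hT
  set y := x ^ (1 - p) with hy
  have hx0 : 0 < x := zero_lt_one.trans hx
  have hV : ∀ t, 0 < log (expFlow x t) := fun t => log_pos (one_lt_expFlow hx t)
  have hW : ∀ t ∈ Icc 0 T, expFlow y t ∈ Ioo 0 1 := fun t ht =>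
    expFlow_mem_Ioo (rpow_lt_one_of_one_lt_of_neg hx (by linarith)) ht.2
      (hshoot ▸ rpow_pos_of_pos (zero_lt_one.trans (one_lt_expFlow hx T)) _)
  refine ⟨x⁻¹, ⟨inv_pos.2 hx0, inv_lt_one_of_one_lt₀ hx⟩,
    fun t => log (expFlow x t) / (log (expFlow x t) - log (expFlow y t)), fun t ht => ?_, ?_, ?_,
    fun t ht => ?_⟩
  · have hlogV := hV t
    have hlogW := log_neg (hW t ht).1 (hW t ht).2
    exact ⟨div_pos hlogV (by linarith), (div_lt_one (by linarith)).2 (by linarith)⟩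
  · dsimp only
    rw [expFlow_zero, expFlow_zero, hy, log_rpow hx0]
    exact div_sub_one_sub_mul_self (log_pos hx).ne' (by linarith)
  · dsimp only
    rw [hshoot, log_rpow (zero_lt_one.trans (one_lt_expFlow hx T))]
    exact div_sub_one_sub_mul_self (hV T).ne' (by linarith)
  · rw [← inv_expFlow hx0.ne']
    exact hasDerivAt_log_div_log_sub_log (hasDerivAt_expFlow x t) (hasDerivAt_expFlow y t)
      (zero_lt_one.trans (one_lt_expFlow hx t)) (hW t ht).1 (hV t).ne'
      (by linarith [hV t, log_neg (hW t ht).1 (hW t ht).2])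
end

section
/- Let 0 < a < 1, ξ ∈ (0,1), and N ≥ 1 an integer. Let w_0, …, w_N ∈ ℝ satisfy 0 < w_n ≤ 1 for 0 ≤ n ≤ N−1 and w_N = 0. Assume that 2(g(w_1) − g(w_0)) = k(w_0) − g(w_0) − ν(ξ,a) ln w_0 and that, for every 2 ≤ n ≤ N, (n+1)(g(w_n) − g(w_{n−1})) = (n−1)(k(w_{n−1}) − k(w_{n−2})) + k(w_{n−1}) − g(w_{n−1}) − ν(ξ,a) ln w_{n−1}. Then ξ ≥ w_0 ≥ w_1 ≥ ⋯ ≥ w_N. -/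
/-!
With `φ(s) = k(s) - g(s) - ν(ξ,a) log s = (ν(s,a) - ν(ξ,a)) log s` the conditions read
`(m + 2) (g(w_{m+1}) - g(w_m)) = m (k(w_m) - k(w_{m-1})) + φ(w_m)`. The function `ν(·,a)` is
increasing on `(0,1)`: it is minus the slope of the secant from `0` to `t = -log s` of the convex
function `t ↦ a e^{(1-a)t} + (1-a) e^{-at} - 1`. Hence `φ ≥ 0` on `(0,ξ]` and `φ ≤ 0` on `[ξ,1]`,
while `g` and `k` are decreasing. By induction, `w_0 ≤ ξ` makes the sequence decrease, whereas
`w_0 > ξ` would make it increase and stay above `ξ`, contradicting `w_N = 0`.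
-/

/-- `g(s) = (a-1) s^a` (real power, so `g(0) = 0`). -/
noncomputable def gfun (a s : ℝ) : ℝ := (a - 1) * s ^ a

/-- `k(s) = a s^{a-1} - 1`. -/
noncomputable def kfun (a s : ℝ) : ℝ := a * s ^ (a - 1) - 1

/-- `ν(s,a) = (a s^{a-1} - 1 + (1-a) s^a) / ln s`. -/
noncomputable def nufun (a s : ℝ) : ℝ :=
  (a * s ^ (a - 1) - 1 + (1 - a) * s ^ a) / Real.log s

open Real Set

/-- The numerator of `ν(s, a)` written in the variable `t = -log s`. -/
noncomputable def nuNumeratorExp (a t : ℝ) : ℝ :=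
  a * exp ((1 - a) * t) + (1 - a) * exp (-a * t) - 1

section Nu

variable {a : ℝ}

lemma convexOn_exp_mul (c : ℝ) : ConvexOn ℝ univ fun t : ℝ ↦ exp (c * t) :=
  convexOn_exp.comp_linearMap (LinearMap.mul ℝ ℝ c)

lemma convexOn_nuNumeratorExp (ha : 0 ≤ a) (ha1 : a ≤ 1) :
    ConvexOn ℝ univ (nuNumeratorExp a) :=
  (((convexOn_exp_mul (1 - a)).smul ha).add
    ((convexOn_exp_mul (-a)).smul (sub_nonneg.2 ha1))).add_const (-1)

lemma nuNumeratorExp_zero : nuNumeratorExp a 0 = 0 := by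
  simp [nuNumeratorExp]

lemma nufun_eq_nuNumeratorExp_div {s : ℝ} (hs : 0 < s) :
    nufun a s = nuNumeratorExp a (-log s) / log s := by
  simp only [nufun, nuNumeratorExp, rpow_def_of_pos hs]
  ring_nf

lemma nufun_monotoneOn (ha : 0 ≤ a) (ha1 : a ≤ 1) : MonotoneOn (nufun a) (Ioo 0 1) := by
  intro s ⟨hs, hs1⟩ s' ⟨hs', hs'1⟩ hss'
  have hslope := (convexOn_nuNumeratorExp ha ha1).secant_mono (mem_univ 0) (mem_univ _)
    (mem_univ _) (neg_pos.2 (log_neg hs' hs'1)).ne' (neg_pos.2 (log_neg hs hs1)).ne'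
    (neg_le_neg (log_le_log hs hss'))
  simp only [nuNumeratorExp_zero, sub_zero] at hslope
  rw [div_neg, div_neg, neg_le_neg_iff] at hslope
  rwa [nufun_eq_nuNumeratorExp_div hs, nufun_eq_nuNumeratorExp_div hs']

lemma nufun_mul_log {s : ℝ} (hs : 0 < s) (hs1 : s ≤ 1) :
    nufun a s * log s = kfun a s - gfun a s := by
  rcases hs1.lt_or_eq with hs1 | rfl
  · rw [nufun, div_mul_cancel₀ _ (log_neg hs hs1).ne, kfun, gfun]
    ring
  · simp [kfun, gfun]

end Nu

section Monotonicity

variable {a : ℝ}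

lemma gfun_strictAntiOn (ha : 0 < a) (ha1 : a < 1) : StrictAntiOn (gfun a) (Ici 0) :=
  fun _ hx _ _ hxy ↦ mul_lt_mul_of_neg_left (rpow_lt_rpow hx hxy ha) (by linarith)

lemma kfun_antitoneOn (ha : 0 ≤ a) (ha1 : a ≤ 1) : AntitoneOn (kfun a) (Ioi 0) :=
  fun _ hx _ _ hxy ↦ sub_le_sub_right
    (mul_le_mul_of_nonneg_left (rpow_le_rpow_of_nonpos hx hxy (by linarith)) ha) 1

end Monotonicity

noncomputable def kktForcing (a ξ s : ℝ) : ℝ :=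
  kfun a s - gfun a s - nufun a ξ * log s

section Forcing

variable {a ξ s : ℝ}

lemma kktForcing_eq (hs : 0 < s) (hs1 : s ≤ 1) :
    kktForcing a ξ s = (nufun a s - nufun a ξ) * log s := by
  rw [kktForcing, sub_mul, nufun_mul_log hs hs1]

lemma kktForcing_nonneg (ha : 0 ≤ a) (ha1 : a ≤ 1) (hξ1 : ξ < 1) (hs : 0 < s) (hsξ : s ≤ ξ) :
    0 ≤ kktForcing a ξ s := by
  have hs1 : s < 1 := hsξ.trans_lt hξ1
  rw [kktForcing_eq hs hs1.le]
  exact mul_nonneg_of_nonpos_of_nonpos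
    (sub_nonpos.2 (nufun_monotoneOn ha ha1 ⟨hs, hs1⟩ ⟨hs.trans_le hsξ, hξ1⟩ hsξ))
    (log_nonpos hs.le hs1.le)

lemma kktForcing_nonpos (ha : 0 ≤ a) (ha1 : a ≤ 1) (hξ0 : 0 < ξ) (hξs : ξ ≤ s) (hs1 : s ≤ 1) :
    kktForcing a ξ s ≤ 0 := by
  have hs : 0 < s := hξ0.trans_le hξs
  rw [kktForcing_eq hs hs1]
  rcases hs1.lt_or_eq with hs1 | rfl
  · exact mul_nonpos_of_nonneg_of_nonpos
      (sub_nonneg.2 (nufun_monotoneOn ha ha1 ⟨hξ0, hξs.trans_lt hs1⟩ ⟨hs, hs1⟩ hξs))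
      (log_nonpos hs.le hs1.le)
  · simp

end Forcing

section Step

variable {a ξ c d x x' y : ℝ}

lemma kkt_step_le_of_le (ha : 0 < a) (ha1 : a < 1) (hξ1 : ξ < 1) (hc : 0 < c) (hd : 0 ≤ d)
    (hx : 0 < x) (hxx' : x ≤ x') (hxξ : x ≤ ξ) (hy : 0 ≤ y)
    (h : c * (gfun a y - gfun a x) = d * (kfun a x - kfun a x') + kktForcing a ξ x) :
    y ≤ x := by
  have hk : 0 ≤ d * (kfun a x - kfun a x') :=
    mul_nonneg hd (sub_nonneg.2 (kfun_antitoneOn ha.le ha1.le hx (hx.trans_le hxx') hxx'))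
  have hg : 0 ≤ gfun a y - gfun a x := by
    have := kktForcing_nonneg ha.le ha1.le hξ1 hx hxξ
    exact nonneg_of_mul_nonneg_right (by linarith) hc
  exact ((gfun_strictAntiOn ha ha1).le_iff_ge (mem_Ici.2 hx.le) (mem_Ici.2 hy)).1
    (sub_nonneg.1 hg)

lemma kkt_step_ge_of_ge (ha : 0 < a) (ha1 : a < 1) (hξ0 : 0 < ξ) (hc : 0 < c) (hd : 0 ≤ d)
    (hx' : 0 < x') (hx'x : x' ≤ x) (hξx : ξ ≤ x) (hx1 : x ≤ 1) (hy : 0 ≤ y)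
    (h : c * (gfun a y - gfun a x) = d * (kfun a x - kfun a x') + kktForcing a ξ x) :
    x ≤ y := by
  have hk : d * (kfun a x - kfun a x') ≤ 0 :=
    mul_nonpos_of_nonneg_of_nonpos hd
      (sub_nonpos.2 (kfun_antitoneOn ha.le ha1.le hx' (hx'.trans_le hx'x) hx'x))
  have hg : gfun a y - gfun a x ≤ 0 := by
    have := kktForcing_nonpos ha.le ha1.le hξ0 hξx hx1
    exact nonpos_of_mul_nonpos_right (by linarith) hc
  exact ((gfun_strictAntiOn ha ha1).le_iff_ge (mem_Ici.2 hy) (mem_Ici.2 (hξ0.le.trans hξx))).1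
    (sub_nonpos.1 hg)

end Step

section Sequence

variable {a ξ : ℝ} {N : ℕ} {w : ℕ → ℝ}

/-- At `m = 0` the truncated index `m - 1 = 0` is harmless: its coefficient vanishes. -/
lemma kkt_recurrence
    (h1 : 2 * (gfun a (w 1) - gfun a (w 0)) =
      kfun a (w 0) - gfun a (w 0) - nufun a ξ * log (w 0))
    (hrec : ∀ n, 2 ≤ n → n ≤ N →
      ((n : ℝ) + 1) * (gfun a (w n) - gfun a (w (n - 1))) =
        ((n : ℝ) - 1) * (kfun a (w (n - 1)) - kfun a (w (n - 2))) +
          kfun a (w (n - 1)) - gfun a (w (n - 1)) - nufun a ξ * log (w (n - 1)))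
    (m : ℕ) (hm : m < N) :
    ((m : ℝ) + 2) * (gfun a (w (m + 1)) - gfun a (w m)) =
      m * (kfun a (w m) - kfun a (w (m - 1))) + kktForcing a ξ (w m) := by
  rcases m with _ | m
  · simpa [kktForcing] using h1
  · have h := hrec (m + 2) (by omega) hm
    rw [show m + 2 - 1 = m + 1 from rfl, show m + 2 - 2 = m from rfl] at h
    rw [kktForcing, Nat.add_sub_cancel]
    push_cast at h ⊢
    linarith

variable (hrec : ∀ m < N, ((m : ℝ) + 2) * (gfun a (w (m + 1)) - gfun a (w m)) =
      m * (kfun a (w m) - kfun a (w (m - 1))) + kktForcing a ξ (w m))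
include hrec

lemma kkt_antitone_of_first_le (ha : 0 < a) (ha1 : a < 1) (hξ1 : ξ < 1)
    (hpos : ∀ n < N, 0 < w n) (hnonneg : ∀ n ≤ N, 0 ≤ w n) (h0 : w 0 ≤ ξ) :
    ∀ n < N, w (n + 1) ≤ w n := by
  have key : ∀ n ≤ N, w n ≤ w (n - 1) ∧ w n ≤ ξ := by
    intro n hn
    induction n with
    | zero => exact ⟨le_rfl, h0⟩
    | succ n ih =>
      obtain ⟨hanti, hle⟩ := ih (by omega)
      have hstep := kkt_step_le_of_le ha ha1 hξ1 (by positivity) (Nat.cast_nonneg n)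
        (hpos n (by omega)) hanti hle (hnonneg (n + 1) hn) (hrec n (by omega))
      exact ⟨hstep, hstep.trans hle⟩
  exact fun n hn ↦ (key (n + 1) hn).1

lemma kkt_le_last_of_le_first (ha : 0 < a) (ha1 : a < 1) (hξ0 : 0 < ξ)
    (hw : ∀ n < N, 0 < w n ∧ w n ≤ 1) (hnonneg : ∀ n ≤ N, 0 ≤ w n) (h0 : ξ ≤ w 0) :
    ξ ≤ w N := by
  have key : ∀ n ≤ N, w (n - 1) ≤ w n ∧ ξ ≤ w n := by
    intro n hn
    induction n with
    | zero => exact ⟨le_rfl, h0⟩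
    | succ n ih =>
      obtain ⟨hmono, hge⟩ := ih (by omega)
      have hstep := kkt_step_ge_of_ge ha ha1 hξ0 (by positivity) (Nat.cast_nonneg n)
        (hw (n - 1) (by omega)).1 hmono hge (hw n (by omega)).2 (hnonneg (n + 1) hn)
        (hrec n (by omega))
      exact ⟨hstep, hge.trans hstep⟩
  exact (key N le_rfl).2

end Sequence

theorem kkt_ratios_decreasing_general (a ξ : ℝ) (ha : 0 < a) (ha1 : a < 1)
    (hξ : ξ ∈ Set.Ioo (0 : ℝ) 1) (N : ℕ) (w : ℕ → ℝ)
    (hw : ∀ n, n < N → 0 < w n ∧ w n ≤ 1) (hwN : w N = 0)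
    (h1 : 2 * (gfun a (w 1) - gfun a (w 0)) =
      kfun a (w 0) - gfun a (w 0) - nufun a ξ * Real.log (w 0))
    (hrec : ∀ n, 2 ≤ n → n ≤ N →
      ((n : ℝ) + 1) * (gfun a (w n) - gfun a (w (n - 1))) =
        ((n : ℝ) - 1) * (kfun a (w (n - 1)) - kfun a (w (n - 2))) +
          kfun a (w (n - 1)) - gfun a (w (n - 1)) - nufun a ξ * Real.log (w (n - 1))) :
    w 0 ≤ ξ ∧ ∀ n, n < N → w (n + 1) ≤ w n := by
  have hrec' := kkt_recurrence h1 hrec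
  have hnonneg : ∀ n ≤ N, 0 ≤ w n := fun n hn ↦
    hn.lt_or_eq.elim (fun h ↦ (hw n h).1.le) (fun h ↦ h ▸ hwN.ge)
  have h0 : w 0 ≤ ξ := by
    by_contra! h
    have := kkt_le_last_of_le_first hrec' ha ha1 hξ.1 hw hnonneg h.le
    linarith [hξ.1]
  exact ⟨h0, kkt_antitone_of_first_le hrec' ha ha1 hξ.2 (fun n hn ↦ (hw n hn).1) hnonneg h0⟩

theorem kkt_ratios_decreasing (a ξ : ℝ) (ha : 0 < a) (ha1 : a < 1)
    (hξ : ξ ∈ Set.Ioo (0 : ℝ) 1) (N : ℕ) (hN : 1 ≤ N) (w : ℕ → ℝ)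
    (hw : ∀ n, n < N → 0 < w n ∧ w n ≤ 1) (hwN : w N = 0)
    (h1 : 2 * (gfun a (w 1) - gfun a (w 0)) =
      kfun a (w 0) - gfun a (w 0) - nufun a ξ * Real.log (w 0))
    (hrec : ∀ n, 2 ≤ n → n ≤ N →
      ((n : ℝ) + 1) * (gfun a (w n) - gfun a (w (n - 1))) =
        ((n : ℝ) - 1) * (kfun a (w (n - 1)) - kfun a (w (n - 2))) +
          kfun a (w (n - 1)) - gfun a (w (n - 1)) - nufun a ξ * Real.log (w (n - 1))) :
    w 0 ≤ ξ ∧ ∀ n, n < N → w (n + 1) ≤ w n :=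
  kkt_ratios_decreasing_general a ξ ha ha1 hξ N w hw hwN h1 hrec
end

section
/- For every 0 < a < 1, the function s ↦ ν(s,a) = (a s^{a−1} − 1 + (1−a) s^a)/ln s is strictly increasing on the interval (0,1), and ν(s,a) < 0 for every s ∈ (0,1). -/
open Real Set

namespace Nufun

variable {a s : ℝ}

noncomputable def num (a s : ℝ) : ℝ :=
  a * s ^ (a - 1) - 1 + (1 - a) * s ^ a

noncomputable def derivNum (a s : ℝ) : ℝ :=
  a * (1 - a) * (s ^ a - s ^ (a - 1)) * log s - num a s

lemma rpow_sub_one_eq_rpow_sub_two_mul (hs : s ≠ 0) (a : ℝ) :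
    s ^ (a - 1) = s ^ (a - 2) * s := by
  rw [← rpow_add_one hs]; ring_nf

lemma rpow_eq_rpow_sub_two_mul (hs : s ≠ 0) (a : ℝ) : s ^ a = s ^ (a - 2) * s * s := by
  rw [← rpow_sub_one_eq_rpow_sub_two_mul hs, ← rpow_add_one hs]; ring_nf

lemma hasDerivAt_num (a : ℝ) (hs : s ≠ 0) :
    HasDerivAt (num a) (a * (1 - a) * (s ^ (a - 1) - s ^ (a - 2))) s := by
  refine ((((hasDerivAt_rpow_const (p := a - 1) (Or.inl hs)).const_mul a).sub_const 1).add
    ((hasDerivAt_rpow_const (p := a) (Or.inl hs)).const_mul (1 - a))).congr_deriv ?_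
  rw [show a - 1 - 1 = a - 2 by ring]; ring

lemma hasDerivAt_derivNum (a : ℝ) (hs : s ≠ 0) :
    HasDerivAt (derivNum a)
      (a * (1 - a) * (a * s ^ (a - 1) + (1 - a) * s ^ (a - 2)) * log s) s := by
  refine (((((hasDerivAt_rpow_const (p := a) (Or.inl hs)).sub
    (hasDerivAt_rpow_const (p := a - 1) (Or.inl hs))).const_mul (a * (1 - a))).mul
    (hasDerivAt_log hs)).sub (hasDerivAt_num a hs)).congr_deriv ?_
  simp only [Pi.sub_apply]
  rw [show a - 1 - 1 = a - 2 by ring, rpow_eq_rpow_sub_two_mul hs a,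
    rpow_sub_one_eq_rpow_sub_two_mul hs a]
  field_simp
  ring

lemma hasDerivAt_nufun (a : ℝ) (hs : 0 < s) (hs1 : s ≠ 1) :
    HasDerivAt (nufun a) (derivNum a s / (s * log s ^ 2)) s := by
  have hlog := log_ne_zero_of_pos_of_ne_one hs hs1
  refine ((hasDerivAt_num a hs.ne').div (hasDerivAt_log hs.ne') hlog).congr_deriv ?_
  have hs0 : s ≠ 0 := hs.ne'
  rw [derivNum, rpow_eq_rpow_sub_two_mul hs0 a, rpow_sub_one_eq_rpow_sub_two_mul hs0 a]
  field_simp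

lemma num_pos (ha : 0 < a) (ha1 : a < 1) (hs : s ∈ Ioo 0 1) : 0 < num a s := by
  have bernoulli : s ^ (1 - a) < a + (1 - a) * s := by
    have h := rpow_one_add_lt_one_add_mul_self (s := s - 1) (by linarith [hs.1])
      (by linarith [hs.2]) (sub_pos.2 ha1) (by linarith)
    rw [add_sub_cancel] at h
    linarith
  have hs0 : s ≠ 0 := hs.1.ne'
  have hfactor : num a s = s ^ (a - 1) * (a + (1 - a) * s - s ^ (1 - a)) := by
    rw [num, mul_sub, ← rpow_add hs.1, show a - 1 + (1 - a) = 0 by ring, rpow_zero,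
      rpow_sub_one hs0]
    field_simp
    ring
  rw [hfactor]
  exact mul_pos (rpow_pos_of_pos hs.1 _) (by linarith)

lemma derivNum_pos (ha : 0 < a) (ha1 : a < 1) (hs : s ∈ Ioo 0 1) : 0 < derivNum a s := by
  have hanti : StrictAntiOn (derivNum a) (Icc s 1) := by
    refine strictAntiOn_of_hasDerivWithinAt_neg (convex_Icc s 1)
      (f' := fun x => a * (1 - a) * (a * x ^ (a - 1) + (1 - a) * x ^ (a - 2)) * log x) ?_ ?_ ?_
    · exact fun x hx =>
        (hasDerivAt_derivNum a (hs.1.trans_le hx.1).ne').continuousAt.continuousWithinAt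
    · rw [interior_Icc]
      exact fun x hx => (hasDerivAt_derivNum a (hs.1.trans hx.1).ne').hasDerivWithinAt
    · rw [interior_Icc]
      intro x hx
      have hx0 : 0 < x := hs.1.trans hx.1
      have hpow₁ := rpow_pos_of_pos hx0 (a - 1)
      have hpow₂ := rpow_pos_of_pos hx0 (a - 2)
      have ha1' : 0 < 1 - a := sub_pos.2 ha1
      have hweight : 0 < a * (1 - a) * (a * x ^ (a - 1) + (1 - a) * x ^ (a - 2)) := by
        positivity
      exact mul_neg_of_pos_of_neg hweight (log_neg hx0 hx.2)
  have h1 : derivNum a 1 = 0 := by simp [derivNum, num]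
  simpa [h1] using hanti ⟨le_rfl, hs.2.le⟩ ⟨hs.2.le, le_rfl⟩ hs.2

end Nufun

open Nufun in
theorem nufun_strictMono_and_neg (a : ℝ) (ha : 0 < a) (ha1 : a < 1) :
    StrictMonoOn (nufun a) (Set.Ioo 0 1) ∧
      ∀ s ∈ Set.Ioo (0 : ℝ) 1, nufun a s < 0 := by
  have hderiv (s : ℝ) (hs : s ∈ Ioo (0 : ℝ) 1) := hasDerivAt_nufun a hs.1 hs.2.ne
  refine ⟨?_, fun s hs => div_neg_of_pos_of_neg (num_pos ha ha1 hs) (log_neg hs.1 hs.2)⟩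
  refine strictMonoOn_of_hasDerivWithinAt_pos (convex_Ioo 0 1)
    (f' := fun s => derivNum a s / (s * log s ^ 2)) (fun s hs => (hderiv s hs).continuousAt.continuousWithinAt) ?_ ?_ <;> rw [interior_Ioo]
  · exact fun s hs => (hderiv s hs).hasDerivWithinAt
  · intro s hs
    have hlog_sq : 0 < log s ^ 2 := pow_two_pos_of_ne_zero (log_neg hs.1 hs.2).ne
    exact div_pos (derivNum_pos ha ha1 hs) (mul_pos hs.1 hlog_sq)
end

section
/- For every 0 < a < 1 and every 0 < z < 1, μ(z,a) < 0. -/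
/-! Weighted AM–GM with weights `a`, `1 - a` applied to `z ^ ((a - 1) / a)` and `z`: the geometric
mean is `z ^ (a - 1) * z ^ (1 - a) = 1`, and the inequality is strict since the two points differ.
So the numerator of `μ` is positive while `ln z < 0`. -/

lemma one_lt_mul_rpow_add_mul {a z : ℝ} (ha : 0 < a) (ha1 : a < 1) (hz : 0 < z) (hz1 : z ≠ 1) :
    1 < a * z ^ ((a - 1) / a) + (1 - a) * z := by
  have hb : (a - 1) / a ≠ 1 := by
    have : (a - 1) / a < 0 := div_neg_of_neg_of_pos (by linarith) ha
    linarith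
  have hne : z ^ ((a - 1) / a) ≠ z := fun h =>
    hb ((Real.rpow_right_inj hz hz1).1 (h.trans (Real.rpow_one z).symm))
  have hgeom : (z ^ ((a - 1) / a)) ^ a * z ^ (1 - a) = 1 := by
    rw [← Real.rpow_mul hz.le, div_mul_cancel₀ _ ha.ne', ← Real.rpow_add hz]
    simp
  calc 1 = (z ^ ((a - 1) / a)) ^ a * z ^ (1 - a) := hgeom.symm
    _ < a * z ^ ((a - 1) / a) + (1 - a) * z :=
      (Real.geom_mean_lt_arith_mean2_weighted_iff_of_pos ha (by linarith)
        (Real.rpow_nonneg hz.le _) hz.le (by ring)).2 hne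

theorem mu_neg (a z : ℝ) (ha : 0 < a) (ha1 : a < 1) (hz : 0 < z) (hz1 : z < 1) :
    mu z a < 0 := by
  have hnum : 0 < a * (a * z ^ ((a - 1) / a) - 1 + (1 - a) * z) :=
    mul_pos ha (by linarith [one_lt_mul_rpow_add_mul ha ha1 hz hz1.ne])
  exact div_neg_of_pos_of_neg hnum (Real.log_neg hz hz1)
end

section
/- For every κ > 1 and z ∈ [0,1), the discrete quantum-limited amplifier maps geometric distributions to geometric distributions: A_κ(ω(z)) = ω(z′) with z′ = (z + κ − 1)/κ; that is, for every k ∈ ℕ, ∑_{n=0}^k C(k,n) (κ−1)^{k−n} κ^{−(k+1)} (1−z) z^n = (1 − z′) (z′)^k. -/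
theorem sum_choose_mul_pow_mul_pow_eq {R : Type*} [CommSemiring R] (a b c z : R) (k : ℕ) :
    ∑ n ∈ Finset.range (k + 1), (k.choose n : R) * a ^ (k - n) * b * (c * z ^ n) =
      b * c * (z + a) ^ k := by
  rw [add_pow, Finset.mul_sum]
  exact Finset.sum_congr rfl fun n _ => by ring

theorem amplifier_geometric_general (κ z : ℝ) (hκ : 1 < κ) (k : ℕ) :
    ∑ n ∈ Finset.range (k + 1),
        (Nat.choose k n : ℝ) * (κ - 1) ^ (k - n) * κ⁻¹ ^ (k + 1) * ((1 - z) * z ^ n) =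
      (1 - (z + κ - 1) / κ) * ((z + κ - 1) / κ) ^ k := by
  have hκ0 : κ ≠ 0 := by linarith
  rw [sum_choose_mul_pow_mul_pow_eq, inv_pow, add_sub_assoc, div_pow, one_sub_div hκ0]
  field_simp
  ring

theorem amplifier_geometric (κ z : ℝ) (hκ : 1 < κ) (hz : z ∈ Set.Ico (0 : ℝ) 1) (k : ℕ) :
    ∑ n ∈ Finset.range (k + 1),
        (Nat.choose k n : ℝ) * (κ - 1) ^ (k - n) * κ⁻¹ ^ (k + 1) * ((1 - z) * z ^ n) =
      (1 - (z + κ - 1) / κ) * ((z + κ - 1) / κ) ^ k :=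
  amplifier_geometric_general κ z hκ k
end

section
/- Let x : ℕ → ℝ be a nonzero finitely supported sequence with x_n ≥ 0 for all n. Then for every a ∈ (0,1), the function a ↦ a · ln(∑_{n} x_n^{1/a}) is differentiable at a, and its derivative equals the Shannon entropy −∑_{n} q_n ln q_n of the normalized distribution q_n = x_n^{1/a} / (∑_{m} x_m^{1/a}) (with the convention 0·ln 0 = 0 and 0^c = 0 for c > 0). -/
open Real Filter Finset Topology

/-!
Only finitely many terms are nonzero, so near `a` the function is `b ↦ b * log S(1/b)` with
`S(t) = ∑ x_n ^ t` a finite sum. With `p_n = x_n ^ (1/a)` and `S = ∑ p_n`, the chain rule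
gives the derivative `log S - (1/a) ∑ p_n log x_n / S = log S - ∑ p_n log p_n / S`, which is
the entropy of `p / S` because `∑ p_n / S = 1`.
-/

namespace Real

theorem hasDerivAt_const_rpow_of_nonneg {c t : ℝ} (hc : 0 ≤ c) (ht : t ≠ 0) :
    HasDerivAt (fun s => c ^ s) (c ^ t * log c) t := by
  rcases hc.eq_or_lt with rfl | hc
  · have hzero : (fun s : ℝ => (0 : ℝ) ^ s) =ᶠ[𝓝 t] fun _ => 0 := by
      filter_upwards [eventually_ne_nhds ht] with s hs using zero_rpow hs
    simpa using (hasDerivAt_const t (0 : ℝ)).congr_of_eventuallyEq hzero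
  · exact (hasStrictDerivAt_const_rpow hc t).hasDerivAt

theorem rpow_mul_log_rpow {c : ℝ} (hc : 0 ≤ c) (t : ℝ) :
    c ^ t * log (c ^ t) = t * (c ^ t * log c) := by
  rcases hc.eq_or_lt with rfl | hc
  · rcases eq_or_ne t 0 with rfl | ht <;> simp [*]
  · rw [log_rpow hc]; ring

end Real

theorem neg_sum_div_mul_log_div {ι : Type*} (s : Finset ι) (p : ι → ℝ)
    (hS : ∑ i ∈ s, p i ≠ 0) :
    -∑ i ∈ s, p i / (∑ j ∈ s, p j) * log (p i / ∑ j ∈ s, p j)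
      = log (∑ i ∈ s, p i) - (∑ i ∈ s, p i * log (p i)) / ∑ i ∈ s, p i := by
  set S := ∑ i ∈ s, p i
  have hterm : ∀ i ∈ s, p i / S * log (p i / S) = p i * log (p i) / S - p i / S * log S := by
    intro i _
    rcases eq_or_ne (p i) 0 with hp | hp
    · simp [hp]
    · rw [log_div hp hS]; ring
  rw [sum_congr rfl hterm, sum_sub_distrib, ← sum_div, ← sum_mul, ← sum_div, div_self hS]
  ring

section
variable {ι : Type*} (s : Finset ι) {x : ι → ℝ}

theorem hasDerivAt_log_sum_rpow (hx : ∀ i ∈ s, 0 ≤ x i) {t : ℝ} (ht : t ≠ 0)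
    (hS : ∑ i ∈ s, x i ^ t ≠ 0) :
    HasDerivAt (fun u => log (∑ i ∈ s, x i ^ u))
      ((∑ i ∈ s, x i ^ t * log (x i)) / ∑ i ∈ s, x i ^ t) t :=
  (HasDerivAt.fun_sum fun i hi => hasDerivAt_const_rpow_of_nonneg (hx i hi) ht).log hS

theorem hasDerivAt_mul_log_sum_rpow_one_div (hx : ∀ i ∈ s, 0 ≤ x i) {a : ℝ} (ha : a ≠ 0)
    (hS : ∑ i ∈ s, x i ^ (1 / a) ≠ 0) :
    HasDerivAt (fun b => b * log (∑ i ∈ s, x i ^ (1 / b)))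
      (-∑ i ∈ s, x i ^ (1 / a) / (∑ j ∈ s, x j ^ (1 / a)) *
        log (x i ^ (1 / a) / ∑ j ∈ s, x j ^ (1 / a))) a := by
  have hinv : HasDerivAt (fun b : ℝ => 1 / b) (-(a ^ 2)⁻¹) a := by
    simpa only [one_div] using hasDerivAt_inv ha
  have hlog := (hasDerivAt_log_sum_rpow s hx (one_div_ne_zero ha) hS).comp a hinv
  refine ((hasDerivAt_id a).mul hlog).congr_deriv ?_
  have hent : ∑ i ∈ s, x i ^ (1 / a) * log (x i ^ (1 / a))
      = 1 / a * ∑ i ∈ s, x i ^ (1 / a) * log (x i) := by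
    rw [mul_sum]; exact sum_congr rfl fun i hi => rpow_mul_log_rpow (hx i hi) _
  rw [neg_sum_div_mul_log_div s _ hS, hent]
  simp only [id_eq, one_mul, Function.comp_apply]
  field_simp
  ring
end

theorem deriv_log_norm_eq_entropy (x : ℕ → ℝ) (hx0 : x ≠ 0)
    (hfin : ∃ N, ∀ n ≥ N, x n = 0) (hnn : ∀ n, 0 ≤ x n)
    (a : ℝ) (ha : a ∈ Set.Ioo (0 : ℝ) 1) :
    HasDerivAt (fun b : ℝ => b * Real.log (∑' n : ℕ, x n ^ (1 / b)))
      (-∑' n : ℕ, (x n ^ (1 / a) / ∑' m : ℕ, x m ^ (1 / a)) *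
        Real.log (x n ^ (1 / a) / ∑' m : ℕ, x m ^ (1 / a))) a := by
  obtain ⟨N, hN⟩ := hfin
  have hvanish : ∀ n ∉ range N, x n = 0 := fun n hn => hN n (by simpa using hn)
  have hpow : ∀ b : ℝ, b ≠ 0 → ∀ n ∉ range N, x n ^ (1 / b) = 0 := fun b hb n hn => by
    rw [hvanish n hn, zero_rpow (one_div_ne_zero hb)]
  have htsum : ∀ b : ℝ, b ≠ 0 → ∑' n, x n ^ (1 / b) = ∑ n ∈ range N, x n ^ (1 / b) :=
    fun b hb => tsum_eq_sum (hpow b hb)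
  have ha0 : a ≠ 0 := ha.1.ne'
  have hS : ∑ n ∈ range N, x n ^ (1 / a) ≠ 0 := by
    obtain ⟨n, hn⟩ := Function.ne_iff.mp hx0
    refine (sum_pos' (fun m _ => rpow_nonneg (hnn m) _) ⟨n, ?_, ?_⟩).ne'
    · by_contra h; exact hn (hvanish n h)
    · exact rpow_pos_of_pos ((hnn n).lt_of_ne' hn) _
  rw [htsum a ha0,
    tsum_eq_sum (s := range N) fun n hn => by rw [hpow a ha0 n hn, zero_div, zero_mul]]
  have hfinite := hasDerivAt_mul_log_sum_rpow_one_div (range N) (fun n _ => hnn n) ha0 hS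
  refine hfinite.congr_of_eventuallyEq ?_
  filter_upwards [eventually_ne_nhds ha0] with b hb
  rw [htsum b hb]
end
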